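/- arXiv:2501.09257 — 3 statements merged into one kernel-verified Lean document; each statement's English description precedes it below -/
import Mathlib

section
/- Let a < b and a' < b' be real numbers. Then: (1) d_I(χ_{[a,b)}, 0) = (b−a)/2, where 0 denotes the zero persistence module; (2) d_I(χ_{[a,b)}, χ_{[a',b')}) = min{ max{|a−a'|, |b−b'|}, max{(b−a)/2, (b'−a')/2} }; (3) d_I(χ_{[a,∞)}, χ_{[a',∞)}) = |a−a'|. -/
open scoped ENNReal

/-- A persistence module: a functor from the poset `(ℝ, ≤)` to `K`-vector spaces,
presented by its structure maps. -/
structure PersistenceModule (K : Type) [Field K] where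
  X : ℝ → Type
  [addCommGroupX : ∀ a, AddCommGroup (X a)]
  [moduleX : ∀ a, Module K (X a)]
  map : ∀ {a b : ℝ}, a ≤ b → (X a →ₗ[K] X b)
  map_refl : ∀ a : ℝ, map (le_refl a) = LinearMap.id
  map_trans : ∀ {a b c : ℝ} (hab : a ≤ b) (hbc : b ≤ c),
      map (hab.trans hbc) = (map hbc).comp (map hab)

attribute [instance] PersistenceModule.addCommGroupX PersistenceModule.moduleX

/-- The pair `(φ, ψ)` is an `ε`-interleaving between the persistence modules `F` and `G`:
both are natural transformations (to the `ε`-shifts) and the two triangle identities hold. -/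
structure IsInterleaving (K : Type) [Field K] (ε : ℝ) (F G : PersistenceModule K)
    (φ : ∀ a : ℝ, F.X a →ₗ[K] G.X (a + ε))
    (ψ : ∀ a : ℝ, G.X a →ₗ[K] F.X (a + ε)) : Prop where
  nonneg : 0 ≤ ε
  φ_nat : ∀ {a b : ℝ} (hab : a ≤ b),
      (φ b).comp (F.map hab) = (G.map (by linarith : a + ε ≤ b + ε)).comp (φ a)
  ψ_nat : ∀ {a b : ℝ} (hab : a ≤ b),
      (ψ b).comp (G.map hab) = (F.map (by linarith : a + ε ≤ b + ε)).comp (ψ a)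
  tri₁ : ∀ (a : ℝ) (h : a ≤ a + ε + ε), (ψ (a + ε)).comp (φ a) = F.map h
  tri₂ : ∀ (a : ℝ) (h : a ≤ a + ε + ε), (φ (a + ε)).comp (ψ a) = G.map h

/-- `F` and `G` are `ε`-interleaved. -/
def Interleaved (K : Type) [Field K] (ε : ℝ) (F G : PersistenceModule K) : Prop :=
  ∃ φ ψ, IsInterleaving K ε F G φ ψ

/-- The interleaving distance `d_I(F, G) ∈ [0, ∞]`: the infimum of the set of `ε ≥ 0` such
that `F` and `G` are `ε`-interleaved (`∞` when this set is empty). -/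
noncomputable def interleavingDist (K : Type) [Field K] (F G : PersistenceModule K) : ℝ≥0∞ :=
  sInf {x : ℝ≥0∞ | ∃ ε : ℝ, 0 ≤ ε ∧ Interleaved K ε F G ∧ x = ENNReal.ofReal ε}

attribute [local instance] Classical.propDecidable

lemma subsingleton_ite_bot (K : Type) [Field K] {J : Set ℝ} {a : ℝ} (ha : a ∉ J) :
    Subsingleton ↥(if a ∈ J then (⊤ : Submodule K K) else ⊥) := by
  rw [if_neg ha]
  infer_instance

/-- The interval module `χ_J` associated with an interval `J ⊆ ℝ`: the vector space `K`
at points of `J` (realized as `⊤ ≤ K`), and `0` elsewhere, with identity/zero structure maps. -/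
noncomputable def intervalModule (K : Type) [Field K] (J : Set ℝ) (hJ : J.OrdConnected) :
    PersistenceModule K where
  X a := ↥(if a ∈ J then (⊤ : Submodule K K) else ⊥)
  map {a b} hab :=
    if h : a ∈ J ∧ b ∈ J then
      Submodule.inclusion (le_of_eq (by rw [if_pos h.1, if_pos h.2]))
    else 0
  map_refl a := by
    by_cases ha : a ∈ J
    · rw [dif_pos ⟨ha, ha⟩]
      rfl
    · rw [dif_neg (fun h => ha h.1)]
      haveI := subsingleton_ite_bot K (J := J) ha
      exact LinearMap.ext fun x => Subsingleton.elim _ _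
  map_trans := by
    intro a b c hab hbc
    by_cases hac : a ∈ J ∧ c ∈ J
    · have hb : b ∈ J := hJ.out hac.1 hac.2 ⟨hab, hbc⟩
      rw [dif_pos hac, dif_pos ⟨hb, hac.2⟩, dif_pos ⟨hac.1, hb⟩]
      rfl
    · rw [dif_neg hac]
      rcases not_and_or.mp hac with ha | hc
      · haveI := subsingleton_ite_bot K (J := J) ha
        exact LinearMap.ext fun x => by
          rw [Subsingleton.elim x 0]
          simp
      · haveI := subsingleton_ite_bot K (J := J) hc
        exact LinearMap.ext fun x => Subsingleton.elim _ _

/-- The interval module `χ_{[a,b)}`. -/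
noncomputable def chiIco (K : Type) [Field K] (a b : ℝ) : PersistenceModule K :=
  intervalModule K (Set.Ico a b) Set.ordConnected_Ico

/-- The interval module `χ_{[a,∞)}`. -/
noncomputable def chiIci (K : Type) [Field K] (a : ℝ) : PersistenceModule K :=
  intervalModule K (Set.Ici a) Set.ordConnected_Ici

/-- The zero persistence module `χ_∅`. -/
noncomputable def zeroPM (K : Type) [Field K] : PersistenceModule K :=
  intervalModule K (∅ : Set ℝ) Set.ordConnected_empty

section Helpers
variable {K : Type} [Field K]

/-- The underlying element of `K` of an element of an interval module. -/
def IMval {J : Set ℝ} {hJ : J.OrdConnected} {x : ℝ} (u : (intervalModule K J hJ).X x) : K :=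
  u.1

lemma IM_ext {J : Set ℝ} {hJ : J.OrdConnected} {x : ℝ} {u v : (intervalModule K J hJ).X x}
    (h : IMval u = IMval v) : u = v := Subtype.ext h

lemma IMval_zero {J : Set ℝ} {hJ : J.OrdConnected} {x : ℝ} :
    IMval (0 : (intervalModule K J hJ).X x) = 0 := rfl

lemma IM_val_eq_zero {J : Set ℝ} {hJ : J.OrdConnected} {x : ℝ} (hx : x ∉ J)
    (u : (intervalModule K J hJ).X x) : IMval u = 0 := by
  have h : IMval u ∈ (if x ∈ J then (⊤ : Submodule K K) else ⊥) := u.2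
  rw [if_neg hx] at h
  exact (Submodule.mem_bot K).mp h

lemma IM_map_val {J : Set ℝ} {hJ : J.OrdConnected} {x y : ℝ} (hxy : x ≤ y)
    (u : (intervalModule K J hJ).X x) :
    IMval ((intervalModule K J hJ).map hxy u) = if y ∈ J then IMval u else 0 := by
  by_cases h : x ∈ J ∧ y ∈ J
  · simp only [intervalModule, dif_pos h, if_pos h.2]
    rfl
  · by_cases hy : y ∈ J
    · have hx : x ∉ J := fun hx => h ⟨hx, hy⟩
      rw [if_pos hy, IM_val_eq_zero hx u]
      simp only [intervalModule, dif_neg h]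
      rfl
    · rw [if_neg hy]
      simp only [intervalModule, dif_neg h]
      rfl

end Helpers
section Helpers2
variable {K : Type} [Field K]

/-- The canonical "identity-shaped" map between interval modules. -/
noncomputable def canMap (K : Type) [Field K] (J J' : Set ℝ) (hJ : J.OrdConnected)
    (hJ' : J'.OrdConnected) (ε : ℝ) (x : ℝ) :
    (intervalModule K J hJ).X x →ₗ[K] (intervalModule K J' hJ').X (x + ε) :=
  if h : x ∈ J ∧ x + ε ∈ J' then
    LinearMap.codRestrict (if x + ε ∈ J' then (⊤ : Submodule K K) else ⊥)
      (Submodule.subtype (if x ∈ J then (⊤ : Submodule K K) else ⊥))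
      (fun u => by rw [if_pos h.2]; trivial)
  else 0

lemma canMap_val {J J' : Set ℝ} {hJ : J.OrdConnected} {hJ' : J'.OrdConnected} {ε : ℝ} {x : ℝ}
    (u : (intervalModule K J hJ).X x) :
    IMval (canMap K J J' hJ hJ' ε x u) = if x ∈ J ∧ x + ε ∈ J' then IMval u else 0 := by
  unfold canMap
  by_cases h : x ∈ J ∧ x + ε ∈ J'
  · exact (congrArg (fun f : (intervalModule K J hJ).X x →ₗ[K] (intervalModule K J' hJ').X (x + ε) => IMval (f u)) (dif_pos h)).trans (if_pos h).symm
  · exact (congrArg (fun f : (intervalModule K J hJ).X x →ₗ[K] (intervalModule K J' hJ').X (x + ε) => IMval (f u)) (dif_neg h)).trans (if_neg h).symm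

end Helpers2
section Helpers3
variable {K : Type} [Field K]

lemma interleaved_symm {ε : ℝ} {F G : PersistenceModule K} (h : Interleaved K ε F G) :
    Interleaved K ε G F := by
  obtain ⟨φ, ψ, hI⟩ := h
  exact ⟨ψ, φ, ⟨hI.nonneg, hI.ψ_nat, hI.φ_nat, hI.tri₂, hI.tri₁⟩⟩

lemma zero_interleaving (J J' : Set ℝ) (hJ : J.OrdConnected) (hJ' : J'.OrdConnected)
    (ε : ℝ) (hε : 0 ≤ ε)
    (h1 : ∀ x, x ∈ J → x + ε + ε ∉ J) (h2 : ∀ x, x ∈ J' → x + ε + ε ∉ J') :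
    Interleaved K ε (intervalModule K J hJ) (intervalModule K J' hJ') := by
  refine ⟨fun _ => 0, fun _ => 0, ⟨hε, ?_, ?_, ?_, ?_⟩⟩
  · intro x y hxy
    rw [LinearMap.zero_comp, LinearMap.comp_zero]
  · intro x y hxy
    rw [LinearMap.zero_comp, LinearMap.comp_zero]
  · intro x h
    apply LinearMap.ext; intro u; apply IM_ext
    rw [LinearMap.comp_apply, LinearMap.zero_apply, IMval_zero, IM_map_val]
    by_cases hx : x ∈ J
    · rw [if_neg (h1 x hx)]
    · by_cases hx2 : x + ε + ε ∈ J
      · rw [if_pos hx2, IM_val_eq_zero hx]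
      · rw [if_neg hx2]
  · intro x h
    apply LinearMap.ext; intro u; apply IM_ext
    rw [LinearMap.comp_apply, LinearMap.zero_apply, IMval_zero, IM_map_val]
    by_cases hx : x ∈ J'
    · rw [if_neg (h2 x hx)]
    · by_cases hx2 : x + ε + ε ∈ J'
      · rw [if_pos hx2, IM_val_eq_zero hx]
      · rw [if_neg hx2]

lemma can_interleaving (J J' : Set ℝ) (hJ : J.OrdConnected) (hJ' : J'.OrdConnected)
    (ε : ℝ) (hε : 0 ≤ ε)
    (N1 : ∀ x y, x ≤ y → x ∈ J → y + ε ∈ J' → x + ε ∈ J')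
    (N2 : ∀ x y, x ≤ y → x ∈ J → y + ε ∈ J' → y ∈ J)
    (N1' : ∀ x y, x ≤ y → x ∈ J' → y + ε ∈ J → x + ε ∈ J)
    (N2' : ∀ x y, x ≤ y → x ∈ J' → y + ε ∈ J → y ∈ J')
    (T1 : ∀ x, x ∈ J → x + ε + ε ∈ J → x + ε ∈ J')
    (T2 : ∀ x, x ∈ J' → x + ε + ε ∈ J' → x + ε ∈ J) :
    Interleaved K ε (intervalModule K J hJ) (intervalModule K J' hJ') := by
  refine ⟨canMap K J J' hJ hJ' ε, canMap K J' J hJ' hJ ε, ⟨hε, ?_, ?_, ?_, ?_⟩⟩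
  · intro x y hxy
    apply LinearMap.ext; intro u; apply IM_ext
    simp only [LinearMap.comp_apply, canMap_val, IM_map_val]
    by_cases hx : x ∈ J
    · by_cases hy' : y + ε ∈ J'
      · have g1 := N1 x y hxy hx hy'
        have g2 := N2 x y hxy hx hy'
        simp [hx, hy', g1, g2]
      · simp [hy']
    · rw [IM_val_eq_zero hx u]
      split_ifs <;> rfl
  · intro x y hxy
    apply LinearMap.ext; intro u; apply IM_ext
    simp only [LinearMap.comp_apply, canMap_val, IM_map_val]
    by_cases hx : x ∈ J'
    · by_cases hy' : y + ε ∈ J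
      · have g1 := N1' x y hxy hx hy'
        have g2 := N2' x y hxy hx hy'
        simp [hx, hy', g1, g2]
      · simp [hy']
    · rw [IM_val_eq_zero hx u]
      split_ifs <;> rfl
  · intro x h
    apply LinearMap.ext; intro u; apply IM_ext
    simp only [LinearMap.comp_apply, canMap_val, IM_map_val]
    by_cases hx : x ∈ J
    · by_cases h2 : x + ε + ε ∈ J
      · have h3 := T1 x hx h2
        simp [hx, h2, h3]
      · simp [h2]
    · rw [IM_val_eq_zero hx u]
      split_ifs <;> rfl
  · intro x h
    apply LinearMap.ext; intro u; apply IM_ext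
    simp only [LinearMap.comp_apply, canMap_val, IM_map_val]
    by_cases hx : x ∈ J'
    · by_cases h2 : x + ε + ε ∈ J'
      · have h3 := T2 x hx h2
        simp [hx, h2, h3]
      · simp [h2]
    · rw [IM_val_eq_zero hx u]
      split_ifs <;> rfl

lemma keyL {J J' : Set ℝ} {hJ : J.OrdConnected} {hJ' : J'.OrdConnected} {ε : ℝ}
    (h : Interleaved K ε (intervalModule K J hJ) (intervalModule K J' hJ'))
    {x : ℝ} (hx : x ∈ J) (hx2 : x + ε + ε ∈ J) : x + ε ∈ J' := by
  obtain ⟨φ, ψ, hI⟩ := h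
  by_contra hn
  have hle : x ≤ x + ε + ε := by linarith [hI.nonneg]
  have ht := hI.tri₁ x hle
  have hmem : (1 : K) ∈ (if x ∈ J then (⊤ : Submodule K K) else ⊥) := by
    rw [if_pos hx]; trivial
  set u : (intervalModule K J hJ).X x := ⟨1, hmem⟩ with hu
  have h1 : IMval ((ψ (x + ε)) (φ x u)) = IMval (((intervalModule K J hJ).map hle) u) := by
    rw [← LinearMap.comp_apply, ht]
  have h2 : IMval (((intervalModule K J hJ).map hle) u) = 1 := by
    rw [IM_map_val, if_pos hx2]
    rfl
  have h3 : φ x u = 0 := by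
    apply IM_ext
    rw [IM_val_eq_zero hn (φ x u), IMval_zero]
  rw [h3, map_zero, IMval_zero, h2] at h1
  exact zero_ne_one h1

lemma dist_eq (F G : PersistenceModule K) (ε₀ : ℝ) (h0 : 0 ≤ ε₀)
    (hmem : Interleaved K ε₀ F G)
    (hlb : ∀ ε, 0 ≤ ε → Interleaved K ε F G → ε₀ ≤ ε) :
    interleavingDist K F G = ENNReal.ofReal ε₀ := by
  apply le_antisymm
  · exact sInf_le ⟨ε₀, h0, hmem, rfl⟩
  · apply le_sInf
    rintro x ⟨ε, hε, hI, rfl⟩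
    exact ENNReal.ofReal_le_ofReal (hlb ε hε hI)

lemma lemA {a b a' b' ε : ℝ} (hε : 0 ≤ ε)
    (h : Interleaved K ε (chiIco K a b) (chiIco K a' b')) (h2 : ε + ε < b - a) :
    a' ≤ a + ε ∧ b - ε ≤ b' := by
  have key : ∀ x, a ≤ x → x + ε + ε < b → x + ε ∈ Set.Ico a' b' := by
    intro x h1 h2'
    exact keyL h ⟨h1, by linarith⟩ ⟨by linarith, h2'⟩
  constructor
  · exact (key a le_rfl (by linarith)).1
  · by_contra hb
    push_neg at hb
    have hm1 : a ≤ max a (b' - ε) := le_max_left _ _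
    have hm2 : b' - ε ≤ max a (b' - ε) := le_max_right _ _
    have hm3 : max a (b' - ε) < b - (ε + ε) :=
      max_lt (by linarith) (by linarith)
    have := (key _ hm1 (by linarith)).2
    linarith

end Helpers3
/-- interleaving distances between interval modules:
`(1)` `d_I(χ_{[a,b)}, 0) = (b-a)/2`;
`(2)` `d_I(χ_{[a,b)}, χ_{[a',b')}) = min {max {|a-a'|, |b-b'|}, max {(b-a)/2, (b'-a')/2}}`;
`(3)` `d_I(χ_{[a,∞)}, χ_{[a',∞)}) = |a-a'|`. -/
theorem interleavingDist_interval_modules {K : Type} [Field K]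
    (a b a' b' : ℝ) (hab : a < b) (hab' : a' < b') :
    interleavingDist K (chiIco K a b) (zeroPM K) = ENNReal.ofReal ((b - a) / 2) ∧
    interleavingDist K (chiIco K a b) (chiIco K a' b') =
      ENNReal.ofReal (min (max |a - a'| |b - b'|) (max ((b - a) / 2) ((b' - a') / 2))) ∧
    interleavingDist K (chiIci K a) (chiIci K a') = ENNReal.ofReal |a - a'| := by
  have e1 : a - a' ≤ |a - a'| := le_abs_self _
  have e2 : a' - a ≤ |a - a'| := by
    have := le_abs_self (a' - a); rw [abs_sub_comm] at this; exact this
  have e3 : b - b' ≤ |b - b'| := le_abs_self _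
  have e4 : b' - b ≤ |b - b'| := by
    have := le_abs_self (b' - b); rw [abs_sub_comm] at this; exact this
  refine ⟨?_, ?_, ?_⟩
  · -- (1) χ_[a,b) vs 0
    apply dist_eq _ _ ((b - a) / 2) (by linarith)
    · apply zero_interleaving _ _ _ _ _ (by linarith : (0:ℝ) ≤ (b - a) / 2)
      · intro x hx hc
        rw [Set.mem_Ico] at hx hc
        linarith [hx.1, hx.2, hc.2]
      · intro x hx
        exact absurd hx (Set.notMem_empty x)
    · intro ε hε hI
      by_contra hc
      push_neg at hc
      have : a + ε ∈ (∅ : Set ℝ) :=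
        keyL hI (⟨le_rfl, hab⟩ : a ∈ Set.Ico a b) ⟨by linarith, by linarith⟩
      exact Set.notMem_empty _ this
  · -- (2) χ_[a,b) vs χ_[a',b')
    set d := max |a - a'| |b - b'| with hdd
    set m := max ((b - a) / 2) ((b' - a') / 2) with hmm
    have hd1 : |a - a'| ≤ d := le_max_left _ _
    have hd2 : |b - b'| ≤ d := le_max_right _ _
    have hm1 : (b - a) / 2 ≤ m := le_max_left _ _
    have hm2 : (b' - a') / 2 ≤ m := le_max_right _ _
    have hd0 : 0 ≤ d := le_trans (abs_nonneg _) hd1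
    have hm0 : 0 ≤ m := by linarith
    apply dist_eq _ _ (min d m) (le_min hd0 hm0)
    · rcases le_total d m with hdm | hdm
      · rw [min_eq_left hdm]
        apply can_interleaving _ _ _ _ d hd0
        · intro x y hxy hx hy
          rw [Set.mem_Ico] at *
          exact ⟨by linarith [hx.1], by linarith [hy.2]⟩
        · intro x y hxy hx hy
          rw [Set.mem_Ico] at *
          exact ⟨by linarith [hx.1], by linarith [hy.2]⟩
        · intro x y hxy hx hy
          rw [Set.mem_Ico] at *
          exact ⟨by linarith [hx.1], by linarith [hy.2]⟩
        · intro x y hxy hx hy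
          rw [Set.mem_Ico] at *
          exact ⟨by linarith [hx.1], by linarith [hy.2]⟩
        · intro x hx h2
          rw [Set.mem_Ico] at *
          exact ⟨by linarith [hx.1], by linarith [h2.2]⟩
        · intro x hx h2
          rw [Set.mem_Ico] at *
          exact ⟨by linarith [hx.1], by linarith [h2.2]⟩
      · rw [min_eq_right hdm]
        apply zero_interleaving _ _ _ _ _ hm0
        · intro x hx hc
          rw [Set.mem_Ico] at hx hc
          linarith [hx.1, hc.2]
        · intro x hx hc
          rw [Set.mem_Ico] at hx hc
          linarith [hx.1, hc.2]
    · intro ε hε hI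
      by_contra hcc
      push_neg at hcc
      have hεd : ε < d := lt_of_lt_of_le hcc (min_le_left _ _)
      have hεm : ε < m := lt_of_lt_of_le hcc (min_le_right _ _)
      rcases lt_max_iff.mp hεm with h1 | h1
      · -- ε + ε < b - a
        obtain ⟨g1, g2⟩ := lemA hε hI (by linarith)
        rcases lt_max_iff.mp hεd with h2 | h2
        · have h3 : ε < a - a' := by
            rcases abs_cases (a - a') with ⟨he, _⟩ | ⟨he, _⟩ <;> linarith
          obtain ⟨g3, -⟩ := lemA hε (interleaved_symm hI) (by linarith)
          linarith
        · have h3 : ε < b' - b := by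
            rcases abs_cases (b - b') with ⟨he, _⟩ | ⟨he, _⟩ <;> linarith
          obtain ⟨-, g4⟩ := lemA hε (interleaved_symm hI) (by linarith)
          linarith
      · -- ε + ε < b' - a'
        obtain ⟨g1, g2⟩ := lemA hε (interleaved_symm hI) (by linarith)
        rcases lt_max_iff.mp hεd with h2 | h2
        · have h3 : ε < a' - a := by
            rcases abs_cases (a - a') with ⟨he, _⟩ | ⟨he, _⟩ <;> linarith
          obtain ⟨g3, -⟩ := lemA hε hI (by linarith)
          linarith
        · have h3 : ε < b - b' := by
            rcases abs_cases (b - b') with ⟨he, _⟩ | ⟨he, _⟩ <;> linarith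
          obtain ⟨-, g4⟩ := lemA hε hI (by linarith)
          linarith
  · -- (3) χ_[a,∞) vs χ_[a',∞)
    apply dist_eq _ _ |a - a'| (abs_nonneg _)
    · apply can_interleaving _ _ _ _ _ (abs_nonneg _)
      · intro x y hxy hx hy
        rw [Set.mem_Ici] at *
        linarith
      · intro x y hxy hx hy
        rw [Set.mem_Ici] at *
        linarith
      · intro x y hxy hx hy
        rw [Set.mem_Ici] at *
        linarith
      · intro x y hxy hx hy
        rw [Set.mem_Ici] at *
        linarith
      · intro x hx h2
        rw [Set.mem_Ici] at *
        linarith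
      · intro x hx h2
        rw [Set.mem_Ici] at *
        linarith
    · intro ε hε hI
      have k1 : a + ε ∈ Set.Ici a' :=
        keyL hI (Set.mem_Ici.mpr le_rfl) (by rw [Set.mem_Ici]; linarith)
      have k2 : a' + ε ∈ Set.Ici a :=
        keyL (interleaved_symm hI) (Set.mem_Ici.mpr le_rfl) (by rw [Set.mem_Ici]; linarith)
      rw [Set.mem_Ici] at k1 k2
      rw [abs_sub_le_iff]
      exact ⟨by linarith, by linarith⟩
end

section
/- Let X be a persistence dg module over ℤ (a functor from the poset (ℤ, ≤) to cochain complexes of K-vector spaces). Then there exist a persistence dg module Q over ℤ and natural transformations Q ⟶ X and Q ⟶ H(X) each of whose components is a quasi-isomorphism of cochain complexes. In particular, every persistence dg module over ℤ is connected to its cohomology H(X) (with zero differential) by a zigzag of quasi-isomorphisms. -/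
open CategoryTheory

/-- Persistence dg modules over `ℤ`: functors from `(ℤ, ≤)` to cochain complexes of
`K`-vector spaces. -/
abbrev PersDGZ (K : Type) [Field K] := ℤ ⥤ CochainComplex (ModuleCat.{0} K) ℤ

/-- The cohomology of a cochain complex, regarded as a cochain complex with zero
differential. -/
noncomputable def homologyComplex (K : Type) [Field K] (C : CochainComplex (ModuleCat.{0} K) ℤ) :
    CochainComplex (ModuleCat.{0} K) ℤ where
  X n := C.homology n
  d _ _ := 0
  shape _ _ _ := rfl
  d_comp_d' := by intros; simp

/-- The cohomology of a persistence dg module, with zero differentials. -/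
noncomputable def Hpers (K : Type) [Field K] (X : PersDGZ K) : PersDGZ K where
  obj i := homologyComplex K (X.obj i)
  map {i j} f :=
    { f := fun n => HomologicalComplex.homologyMap (X.map f) n
      comm' := by intros; simp [homologyComplex] }
  map_id i := by
    ext n
    simp [homologyComplex]
  map_comp f g := by
    ext n : 2
    simp only [HomologicalComplex.comp_f]
    rw [X.map_comp, HomologicalComplex.homologyMap_comp]
    rfl

/-- A natural transformation of persistence dg modules each of whose components is a
quasi-isomorphism. -/
def QIso (K : Type) [Field K] (X Y : PersDGZ K) : Prop :=
  ∃ f : X ⟶ Y, ∀ i : ℤ, QuasiIso (f.app i)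

/-- `X` and `Y` are connected by a zigzag of quasi-isomorphisms. -/
def ZigzagQIso (K : Type) [Field K] : PersDGZ K → PersDGZ K → Prop :=
  Relation.ReflTransGen (fun A B => QIso K A B ∨ QIso K B A)

namespace PFproof


variable {K : Type} [Field K]

variable (C : CochainComplex (ModuleCat.{0} K) ℤ)

/-- cycles submodule -/
noncomputable def Zs (n : ℤ) : Submodule K (C.X n) := LinearMap.range (C.iCycles n).hom

/-- boundaries submodule -/
noncomputable def Bs (n : ℤ) : Submodule K (C.X n) := LinearMap.range (C.d (n-1) n).hom

lemma mem_Bs {i j : ℤ} (h : i = j - 1) (y : C.X i) : C.d i j y ∈ Bs C j := by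
  subst h; exact ⟨y, rfl⟩

lemma d_eq_zero_of_mem_Zs {n : ℤ} {x : C.X n} (hx : x ∈ Zs C n) (j : ℤ) :
    C.d n j x = 0 := by
  obtain ⟨c, rfl⟩ := hx
  have : (C.iCycles n ≫ C.d n j) c = 0 := by rw [C.iCycles_d]; rfl
  exact this

lemma mem_Zs_of_d {n j : ℤ} (h : j = n + 1) (x : C.X n) (hx : C.d n j x = 0) :
    x ∈ Zs C n := by
  subst h
  let φ : ModuleCat.of K K ⟶ C.X n := ModuleCat.ofHom (LinearMap.toSpanSingleton K _ x)
  have hφ : φ ≫ C.d n (n+1) = 0 := by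
    refine ModuleCat.hom_ext <| LinearMap.ext fun r => ?_
    show C.d n (n+1) (r • x) = 0
    rw [map_smul, hx, smul_zero]
  refine ⟨C.liftCycles φ (n+1) (by simp) hφ (1 : K), ?_⟩
  have : ∀ a : K, (C.liftCycles φ (n+1) (by simp) hφ ≫ C.iCycles n) a = φ a := by
    intro a; rw [C.liftCycles_i]
  have h2 : (HomologicalComplex.iCycles C n) ((C.liftCycles φ (n+1) (by simp) hφ) (1:K)) = (1:K) • x := this 1
  rw [h2, one_smul]

lemma Bs_le_Zs (n : ℤ) : Bs C n ≤ Zs C n := by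
  rintro x ⟨y, rfl⟩
  have h1 : (C.toCycles (n-1) n ≫ C.iCycles n) y = C.d (n-1) n y := by
    rw [C.toCycles_i]
  rw [← h1]
  exact ⟨_, rfl⟩

lemma pi_surjective (n : ℤ) : Function.Surjective (C.homologyπ n) := by
  rw [← ModuleCat.epi_iff_surjective]; infer_instance

lemma iCycles_injective (n : ℤ) : Function.Injective (C.iCycles n) := by
  rw [← ModuleCat.mono_iff_injective]; infer_instance

lemma exists_toCycles_of_pi_eq_zero {n : ℤ} (c : C.cycles n)
    (hc : C.homologyπ n c = 0) : ∃ y : C.X (n-1), C.toCycles (n-1) n y = c := by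
  classical
  set killer : Submodule K (C.cycles n) := LinearMap.range (C.toCycles (n-1) n).hom with hK
  let Qc : ModuleCat.{0} K := ModuleCat.of K (C.cycles n ⧸ killer)
  let mk : C.cycles n ⟶ Qc := ModuleCat.ofHom killer.mkQ
  have h0 : C.toCycles (n-1) n ≫ mk = 0 := by
    refine ModuleCat.hom_ext <| LinearMap.ext fun y => ?_
    show mk (C.toCycles (n-1) n y) = 0
    exact (Submodule.Quotient.mk_eq_zero _).2 ⟨y, rfl⟩
  have hcolim := C.homologyIsCokernel (n-1) n (by simp)
  obtain ⟨θ, hθ⟩ := Limits.CokernelCofork.IsColimit.desc' hcolim mk h0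
  have : mk c = 0 := by
    have h1 : (C.homologyπ n ≫ θ) c = mk c := by
      rw [show C.homologyπ n ≫ θ = mk from by simpa using hθ]
    rw [← h1]
    show θ (C.homologyπ n c) = 0
    rw [hc, map_zero]
  have hmem : c ∈ killer := (Submodule.Quotient.mk_eq_zero _).1 this
  obtain ⟨y, hy⟩ := hmem
  exact ⟨y, hy⟩

lemma pi_toCycles_eq_zero (n : ℤ) (y : C.X (n-1)) :
    C.homologyπ n (C.toCycles (n-1) n y) = 0 := by
  have : (C.toCycles (n-1) n ≫ C.homologyπ n) y = 0 := by
    rw [C.toCycles_comp_homologyπ]; rfl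
  exact this


section Compl

noncomputable def Vs (n : ℤ) : Submodule K (C.X n) := (Submodule.exists_isCompl (Zs C n)).choose

lemma isCompl_Zs_Vs (n : ℤ) : IsCompl (Zs C n) (Vs C n) :=
  (Submodule.exists_isCompl (Zs C n)).choose_spec

noncomputable def U's (n : ℤ) : Submodule K (C.X n) := (Submodule.exists_isCompl (Bs C n)).choose

lemma isCompl_Bs_U's (n : ℤ) : IsCompl (Bs C n) (U's C n) :=
  (Submodule.exists_isCompl (Bs C n)).choose_spec

noncomputable def Us (n : ℤ) : Submodule K (C.X n) := U's C n ⊓ Zs C n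

lemma Us_le_Zs (n : ℤ) : Us C n ≤ Zs C n := inf_le_right

lemma Bs_sup_Us (n : ℤ) : Bs C n ⊔ Us C n = Zs C n := by
  apply le_antisymm
  · exact sup_le (Bs_le_Zs C n) (Us_le_Zs C n)
  · intro z hz
    obtain ⟨b, u', hb, hu', hzdec⟩ :=
      Submodule.codisjoint_iff_exists_add_eq.mp (isCompl_Bs_U's C n).codisjoint z
    have hu'Z : u' ∈ Zs C n := by
      have : u' = z - b := by rw [← hzdec]; abel
      rw [this]
      exact sub_mem hz (Bs_le_Zs C n hb)
    rw [← hzdec]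
    exact Submodule.add_mem_sup hb (Submodule.mem_inf.mpr ⟨hu', hu'Z⟩)

lemma Bs_disj_Us (n : ℤ) : Disjoint (Bs C n) (Us C n) := by
  refine Submodule.disjoint_def.2 fun x hxB hxU => ?_
  exact Submodule.disjoint_def.1 (isCompl_Bs_U's C n).disjoint x hxB hxU.1

lemma isCompl_Bs_UV (n : ℤ) : IsCompl (Bs C n) (Us C n ⊔ Vs C n) := by
  constructor
  · refine Submodule.disjoint_def.2 fun x hxB hxUV => ?_
    obtain ⟨u, hu, v, hv, rfl⟩ := Submodule.mem_sup.1 hxUV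
    have hvZ : v ∈ Zs C n := by
      have : v = (u + v) - u := by abel
      rw [this]
      exact sub_mem (Bs_le_Zs C n hxB) (Us_le_Zs C n hu)
    have hv0 : v = 0 := Submodule.disjoint_def.1 (isCompl_Zs_Vs C n).disjoint v hvZ hv
    subst hv0
    rw [add_zero] at hxB ⊢
    exact Submodule.disjoint_def.1 (Bs_disj_Us C n) u hxB hu
  · rw [codisjoint_iff, ← sup_assoc, Bs_sup_Us, ← codisjoint_iff]
    exact (isCompl_Zs_Vs C n).codisjoint

lemma isCompl_Us_BV (n : ℤ) : IsCompl (Us C n) (Bs C n ⊔ Vs C n) := by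
  constructor
  · refine Submodule.disjoint_def.2 fun x hxU hxBV => ?_
    obtain ⟨b, hb, v, hv, rfl⟩ := Submodule.mem_sup.1 hxBV
    have hvZ : v ∈ Zs C n := by
      have : v = (b + v) - b := by abel
      rw [this]
      exact sub_mem (Us_le_Zs C n hxU) (Bs_le_Zs C n hb)
    have hv0 : v = 0 := Submodule.disjoint_def.1 (isCompl_Zs_Vs C n).disjoint v hvZ hv
    subst hv0
    rw [add_zero] at hxU ⊢
    exact Submodule.disjoint_def.1 (Bs_disj_Us C n).symm (b) hxU hb
  · rw [codisjoint_iff, ← sup_assoc, sup_comm (Us C n) (Bs C n), Bs_sup_Us, ← codisjoint_iff]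
    exact (isCompl_Zs_Vs C n).codisjoint

noncomputable def pB (n : ℤ) : C.X n →ₗ[K] Bs C n :=
  (Bs C n).linearProjOfIsCompl _ (isCompl_Bs_UV C n)

noncomputable def pU (n : ℤ) : C.X n →ₗ[K] Us C n :=
  (Us C n).linearProjOfIsCompl _ (isCompl_Us_BV C n)

lemma exists_decomp (n : ℤ) (x : C.X n) :
    ∃ b ∈ Bs C n, ∃ u ∈ Us C n, ∃ v ∈ Vs C n, x = b + u + v := by
  obtain ⟨b, w, hb, hw, hx⟩ :=
    Submodule.codisjoint_iff_exists_add_eq.mp (isCompl_Bs_UV C n).codisjoint x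
  obtain ⟨u, hu, v, hv, rfl⟩ := Submodule.mem_sup.1 hw
  exact ⟨b, hb, u, hu, v, hv, by rw [← hx, add_assoc]⟩

lemma pB_spec (n : ℤ) {b u v : C.X n} (hb : b ∈ Bs C n) (hu : u ∈ Us C n) (hv : v ∈ Vs C n) :
    (pB C n (b + u + v) : C.X n) = b := by
  have h1 : (pB C n b : C.X n) = b := by
    have := Submodule.linearProjOfIsCompl_apply_left (isCompl_Bs_UV C n) ⟨b, hb⟩
    exact congrArg Subtype.val this
  have h2 : pB C n (u + v) = 0 :=
    Submodule.linearProjOfIsCompl_apply_right' (isCompl_Bs_UV C n)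
      (Submodule.add_mem_sup hu hv)
  rw [add_assoc, map_add, h2, add_zero, h1]

lemma pU_spec (n : ℤ) {b u v : C.X n} (hb : b ∈ Bs C n) (hu : u ∈ Us C n) (hv : v ∈ Vs C n) :
    (pU C n (b + u + v) : C.X n) = u := by
  have h1 : (pU C n u : C.X n) = u := by
    have := Submodule.linearProjOfIsCompl_apply_left (isCompl_Us_BV C n) ⟨u, hu⟩
    exact congrArg Subtype.val this
  have h2 : pU C n (b + v) = 0 :=
    Submodule.linearProjOfIsCompl_apply_right' (isCompl_Us_BV C n)
      (Submodule.add_mem_sup hb hv)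
  have h3 : b + u + v = u + (b + v) := by abel
  rw [h3, map_add, h2, add_zero, h1]

end Compl


section SR

noncomputable def eZ (n : ℤ) : C.cycles n ≃ₗ[K] Zs C n :=
  LinearEquiv.ofInjective (C.iCycles n).hom (iCycles_injective C n)

lemma eZ_symm_apply (n : ℤ) (z : Zs C n) :
    C.iCycles n ((eZ C n).symm z) = (z : C.X n) := by
  have : (eZ C n) ((eZ C n).symm z) = z := (eZ C n).apply_symm_apply z
  have h2 := congrArg Subtype.val this
  rw [← h2]
  rfl

lemma eZ_symm_eq (n : ℤ) (z : Zs C n) (c : C.cycles n) (h : C.iCycles n c = (z : C.X n)) :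
    (eZ C n).symm z = c := by
  apply iCycles_injective C n
  rw [eZ_symm_apply, h]

noncomputable def γmap (n : ℤ) : Us C n →ₗ[K] C.homology n :=
  (show (C.cycles n : Type) →ₗ[K] C.homology n from (C.homologyπ n).hom) ∘ₗ
    ((eZ C n).symm.toLinearMap ∘ₗ Submodule.inclusion (Us_le_Zs C n))

lemma γmap_apply (n : ℤ) (u : Us C n) :
    γmap C n u = C.homologyπ n ((eZ C n).symm ⟨(u : C.X n), Us_le_Zs C n u.2⟩) := rfl

lemma pi_eZ_symm (n : ℤ) (z : Zs C n) :
    C.homologyπ n ((eZ C n).symm z) = γmap C n (pU C n (z : C.X n)) := by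
  obtain ⟨b, hb, u, hu, v, hv, hdec⟩ := exists_decomp C n (z : C.X n)
  have hv0 : v = 0 := by
    have hvZ : v ∈ Zs C n := by
      have : v = (z : C.X n) - b - u := by rw [hdec]; abel
      rw [this]
      exact sub_mem (sub_mem z.2 (Bs_le_Zs C n hb)) (Us_le_Zs C n hu)
    exact Submodule.disjoint_def.1 (isCompl_Zs_Vs C n).disjoint v hvZ hv
  subst hv0
  have hzdec : (z : C.X n) = b + u := by rw [hdec, add_zero]
  have hpU : (pU C n (z : C.X n) : C.X n) = u := by rw [hdec]; exact pU_spec C n hb hu hv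
  have hbZ : b ∈ Zs C n := Bs_le_Zs C n hb
  have huZ : u ∈ Zs C n := Us_le_Zs C n hu
  have hz : z = (⟨b, hbZ⟩ : Zs C n) + ⟨u, huZ⟩ := Subtype.ext hzdec
  have hpUu : pU C n (z : C.X n) = ⟨u, hu⟩ := Subtype.ext hpU
  rw [hpUu, hz, map_add, map_add]
  have hb0 : C.homologyπ n ((eZ C n).symm ⟨b, hbZ⟩) = 0 := by
    obtain ⟨y, hy⟩ := hb
    have hcy : (eZ C n).symm ⟨b, hbZ⟩ = C.toCycles (n-1) n y := by
      apply eZ_symm_eq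
      have h1 : (C.toCycles (n-1) n ≫ C.iCycles n) y = C.d (n-1) n y := by
        rw [C.toCycles_i]
      exact h1.trans hy
    rw [hcy]
    exact pi_toCycles_eq_zero C n y
  rw [hb0, zero_add]
  rfl

lemma γmap_bijective (n : ℤ) : Function.Bijective (γmap C n) := by
  constructor
  · intro u₁ u₂ h
    suffices hinj : ∀ u : Us C n, γmap C n u = 0 → u = 0 by
      have := hinj (u₁ - u₂) (by rw [map_sub, h, sub_self])
      have h2 : u₁ - u₂ = 0 := this
      rw [sub_eq_zero] at h2; exact h2
    intro u hu0
    set c0 : C.cycles n := (eZ C n).symm ⟨(u : C.X n), Us_le_Zs C n u.2⟩ with hc0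
    have hπ : C.homologyπ n c0 = 0 := by rw [← γmap_apply]; exact hu0
    obtain ⟨y, hy⟩ := exists_toCycles_of_pi_eq_zero C c0 hπ
    have hmem : (u : C.X n) ∈ Bs C n := by
      have h1 : C.iCycles n c0 = (u : C.X n) := eZ_symm_apply C n _
      have h2 : (C.toCycles (n-1) n ≫ C.iCycles n) y = C.d (n-1) n y := by rw [C.toCycles_i]
      refine ⟨y, ?_⟩
      rw [← h2]
      show C.iCycles n (C.toCycles (n-1) n y) = _
      rw [hy, h1]
    have := Submodule.disjoint_def.1 (Bs_disj_Us C n) (u : C.X n) hmem u.2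
    exact Subtype.ext this
  · intro h
    obtain ⟨c, hc⟩ := pi_surjective C n h
    have : (eZ C n).symm (eZ C n c) = c := (eZ C n).symm_apply_apply c
    rw [← this, pi_eZ_symm] at hc
    exact ⟨_, hc⟩

noncomputable def βe (n : ℤ) : Us C n ≃ₗ[K] C.homology n :=
  LinearEquiv.ofBijective _ (γmap_bijective C n)

lemma βe_apply (n : ℤ) (u : Us C n) : βe C n u = γmap C n u := rfl

noncomputable def sMap (n : ℤ) : (C.homology n : Type) →ₗ[K] C.X n :=
  (Us C n).subtype ∘ₗ (βe C n).symm.toLinearMap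

noncomputable def rMap (n : ℤ) : (C.X n : Type) →ₗ[K] C.homology n :=
  (βe C n).toLinearMap ∘ₗ pU C n

lemma sMap_mem_Us (n : ℤ) (h : C.homology n) : sMap C n h ∈ Us C n :=
  ((βe C n).symm h).2

lemma d_sMap (n j : ℤ) (h : C.homology n) : C.d n j (sMap C n h) = 0 :=
  d_eq_zero_of_mem_Zs C (Us_le_Zs C n (sMap_mem_Us C n h)) j

lemma rMap_eq_zero_of_mem_Bs {n : ℤ} {x : C.X n} (hx : x ∈ Bs C n) : rMap C n x = 0 := by
  show βe C n (pU C n x) = 0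
  have : pU C n x = 0 :=
    Submodule.linearProjOfIsCompl_apply_right' (isCompl_Us_BV C n)
      (Submodule.mem_sup_left hx)
  rw [this, map_zero]

lemma rMap_d {i j : ℤ} (hij : i = j - 1) (y : C.X i) : rMap C j (C.d i j y) = 0 :=
  rMap_eq_zero_of_mem_Bs C (mem_Bs C hij y)

lemma rMap_of_mem_Us {n : ℤ} {u : C.X n} (hu : u ∈ Us C n) :
    rMap C n u = βe C n ⟨u, hu⟩ := by
  show βe C n (pU C n u) = _
  congr 1
  apply Subtype.ext
  have h := pU_spec C n (K := K) (zero_mem _) hu (zero_mem _)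
  have h0 : (0 : C.X n) + u + 0 = u := by abel
  rw [h0] at h
  exact h

lemma rMap_sMap (n : ℤ) (h : C.homology n) : rMap C n (sMap C n h) = h := by
  rw [rMap_of_mem_Us C (sMap_mem_Us C n h)]
  have : (⟨sMap C n h, sMap_mem_Us C n h⟩ : Us C n) = (βe C n).symm h := rfl
  rw [this, (βe C n).apply_symm_apply]

lemma rMap_iCycles (n : ℤ) (c : C.cycles n) :
    rMap C n (C.iCycles n c) = C.homologyπ n c := by
  have h1 : (eZ C n).symm (eZ C n c) = c := (eZ C n).symm_apply_apply c
  have h2 := pi_eZ_symm C n (eZ C n c)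
  rw [h1] at h2
  have h3 : ((eZ C n) c : C.X n) = C.iCycles n c := rfl
  rw [h3] at h2
  rw [h2]
  rfl

end SR

section T

lemma mem_Bs_d {i j : ℤ} (hij : i = j - 1) (v : C.X i) : C.d i j v ∈ Bs C j :=
  mem_Bs C hij v

noncomputable def dVmap (i j : ℤ) (hij : i = j - 1) : (Vs C i : Type) →ₗ[K] Bs C j :=
  LinearMap.codRestrict _
    ((show (C.X i : Type) →ₗ[K] C.X j from (C.d i j).hom) ∘ₗ (Vs C i).subtype)
    (fun v => mem_Bs C hij (v : C.X i))

lemma dVmap_apply (i j : ℤ) (hij : i = j - 1) (v : Vs C i) :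
    (dVmap C i j hij v : C.X j) = C.d i j (v : C.X i) := rfl

lemma dVmap_bijective (i j : ℤ) (hij : i = j - 1) : Function.Bijective (dVmap C i j hij) := by
  constructor
  · intro v₁ v₂ h
    suffices hinj : ∀ v : Vs C i, dVmap C i j hij v = 0 → v = 0 by
      have := hinj (v₁ - v₂) (by rw [map_sub, h, sub_self])
      rwa [sub_eq_zero] at this
    intro v hv
    have h1 : C.d i j (v : C.X i) = 0 := by
      have := congrArg Subtype.val hv
      rw [dVmap_apply] at this
      exact this
    have h2 : (v : C.X i) ∈ Zs C i := mem_Zs_of_d C (by omega) _ h1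
    exact Subtype.ext (Submodule.disjoint_def.1 (isCompl_Zs_Vs C i).disjoint _ h2 v.2)
  · rintro ⟨b, hb⟩
    subst hij
    obtain ⟨y, hy⟩ := hb
    obtain ⟨b', hb', u', hu', v', hv', hdec⟩ := exists_decomp C (j-1) y
    refine ⟨⟨v', hv'⟩, ?_⟩
    apply Subtype.ext
    rw [dVmap_apply]
    show C.d (j-1) j v' = b
    rw [← hy, hdec, map_add, map_add,
      d_eq_zero_of_mem_Zs C (Bs_le_Zs C _ hb') j,
      d_eq_zero_of_mem_Zs C (Us_le_Zs C _ hu') j, zero_add, zero_add]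

noncomputable def dVe (i j : ℤ) (hij : i = j - 1) : (Vs C i) ≃ₗ[K] Bs C j :=
  LinearEquiv.ofBijective _ (dVmap_bijective C i j hij)

noncomputable def tMap (i j : ℤ) (hij : i = j - 1) : (C.X j : Type) →ₗ[K] C.X i :=
  (Vs C i).subtype ∘ₗ (dVe C i j hij).symm.toLinearMap ∘ₗ pB C j

lemma d_tMap (i j : ℤ) (hij : i = j - 1) (x : C.X j) :
    C.d i j (tMap C i j hij x) = (pB C j x : C.X j) := by
  show C.d i j (((dVe C i j hij).symm (pB C j x) : C.X i)) = _
  have := congrArg Subtype.val ((dVe C i j hij).apply_symm_apply (pB C j x))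
  rw [← this]
  rfl

lemma tMap_d {i j : ℤ} (hij : i = j - 1) (v : C.X i) (hv : v ∈ Vs C i) :
    tMap C i j hij (C.d i j v) = v := by
  have h1 : pB C j (C.d i j v) = dVmap C i j hij ⟨v, hv⟩ := by
    apply Subtype.ext
    rw [dVmap_apply]
    show (pB C j (C.d i j v) : C.X j) = C.d i j v
    have hmem := mem_Bs C hij v
    have h := pB_spec C j hmem (zero_mem _) (zero_mem _)
    have h0 : C.d i j v + 0 + 0 = C.d i j v := by abel
    rw [h0] at h
    exact h
  show ((dVe C i j hij).symm (pB C j (C.d i j v)) : C.X i) = v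
  rw [h1]
  have : (dVe C i j hij).symm (dVmap C i j hij ⟨v, hv⟩) = ⟨v, hv⟩ :=
    (dVe C i j hij).symm_apply_apply ⟨v, hv⟩
  exact congrArg Subtype.val this

lemma sMap_rMap_decomp (n : ℤ) {b u v : C.X n} (hb : b ∈ Bs C n) (hu : u ∈ Us C n)
    (hv : v ∈ Vs C n) : sMap C n (rMap C n (b + u + v)) = u := by
  show ((βe C n).symm (βe C n (pU C n (b+u+v))) : C.X n) = u
  rw [(βe C n).symm_apply_apply]
  exact pU_spec C n hb hu hv

lemma homotopy_id (p n q : ℤ) (hp : p = n - 1) (hq : n = q - 1) (x : C.X n) :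
    C.d p n (tMap C p n hp x) + tMap C n q hq (C.d n q x)
      = x - sMap C n (rMap C n x) := by
  obtain ⟨b, hb, u, hu, v, hv, rfl⟩ := exists_decomp C n x
  rw [sMap_rMap_decomp C n hb hu hv]
  have h1 : C.d p n (tMap C p n hp (b + u + v)) = b := by
    rw [d_tMap, pB_spec C n hb hu hv]
  have h2 : C.d n q (b + u + v) = C.d n q v := by
    rw [map_add, map_add, d_eq_zero_of_mem_Zs C (Bs_le_Zs C _ hb) q,
      d_eq_zero_of_mem_Zs C (Us_le_Zs C _ hu) q, zero_add, zero_add]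
  rw [h1, h2, tMap_d C hq v hv]
  abel

end T


section Star

variable (D : CochainComplex (ModuleCat.{0} K) ℤ)

lemma star (F : C ⟶ D) (n : ℤ) (h : C.homology n) :
    rMap D n (F.f n (sMap C n h)) = HomologicalComplex.homologyMap F n h := by
  set u : Us C n := (βe C n).symm h with hu
  have hs : sMap C n h = (u : C.X n) := rfl
  set z : Zs C n := ⟨(u : C.X n), Us_le_Zs C n u.2⟩ with hz
  set c : C.cycles n := (eZ C n).symm z with hc
  have hic : C.iCycles n c = (u : C.X n) := eZ_symm_apply C n z
  have hFc : D.iCycles n (HomologicalComplex.cyclesMap F n c) = F.f n (u : C.X n) := by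
    have h1 : (HomologicalComplex.cyclesMap F n ≫ D.iCycles n) c
        = (C.iCycles n ≫ F.f n) c := by rw [HomologicalComplex.cyclesMap_i]
    have h2 : F.f n (C.iCycles n c) = F.f n (u : C.X n) := by rw [hic]
    exact h1.trans h2
  have hmemZ : F.f n (u : C.X n) ∈ Zs D n := ⟨_, hFc⟩
  have hsymm : (eZ D n).symm ⟨F.f n (u : C.X n), hmemZ⟩ = HomologicalComplex.cyclesMap F n c :=
    eZ_symm_eq D n _ _ hFc
  have hpi := pi_eZ_symm D n ⟨F.f n (u : C.X n), hmemZ⟩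
  rw [hsymm] at hpi
  have hnat : D.homologyπ n (HomologicalComplex.cyclesMap F n c)
      = HomologicalComplex.homologyMap F n (C.homologyπ n c) := by
    have h3 : (HomologicalComplex.cyclesMap F n ≫ D.homologyπ n) c
        = (C.homologyπ n ≫ HomologicalComplex.homologyMap F n) c := by
      rw [HomologicalComplex.homologyπ_naturality]
    exact h3
  have hπc : C.homologyπ n c = h := by
    rw [← rMap_iCycles C n c, hic]
    rw [rMap_of_mem_Us C u.2]
    have : (⟨(u : C.X n), u.2⟩ : Us C n) = u := Subtype.ext rfl
    rw [this, hu, (βe C n).apply_symm_apply]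
  show βe D n (pU D n (F.f n (sMap C n h))) = _
  rw [hs]
  have : βe D n (pU D n (F.f n (u : C.X n))) = γmap D n (pU D n (F.f n (u : C.X n))) := rfl
  rw [this, ← hpi, hnat, hπc]

noncomputable def wMap (F : C ⟶ D) (n : ℤ) : (C.homology n : Type) →ₗ[K] D.X n :=
  (show (C.X n : Type) →ₗ[K] D.X n from (F.f n).hom) ∘ₗ sMap C n
    - sMap D n ∘ₗ
      (show (C.homology n : Type) →ₗ[K] D.homology n from (HomologicalComplex.homologyMap F n).hom)

lemma wMap_apply (F : C ⟶ D) (n : ℤ) (h : C.homology n) :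
    wMap C D F n h
      = F.f n (sMap C n h) - sMap D n (HomologicalComplex.homologyMap F n h) := rfl

noncomputable def kMap (F : C ⟶ D) (p n : ℤ) (hp : p = n - 1) :
    (C.homology n : Type) →ₗ[K] D.X p :=
  tMap D p n hp ∘ₗ wMap C D F n

lemma d_wMap (F : C ⟶ D) (n q : ℤ) (h : C.homology n) :
    D.d n q (wMap C D F n h) = 0 := by
  rw [wMap_apply, map_sub, d_sMap, sub_zero]
  have hcomm : (F.f n ≫ D.d n q) (sMap C n h) = (C.d n q ≫ F.f q) (sMap C n h) := by
    rw [F.comm]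
  have h1 : D.d n q (F.f n (sMap C n h)) = F.f q (C.d n q (sMap C n h)) := hcomm
  rw [h1, d_sMap, map_zero]

lemma r_wMap (F : C ⟶ D) (n : ℤ) (h : C.homology n) :
    rMap D n (wMap C D F n h) = 0 := by
  rw [wMap_apply, map_sub, star, rMap_sMap, sub_self]

lemma d_kMap (F : C ⟶ D) (p n : ℤ) (hp : p = n - 1) (h : C.homology n) :
    D.d p n (kMap C D F p n hp h) = wMap C D F n h := by
  have hid := homotopy_id D p n (n+1) hp (by omega) (wMap C D F n h)
  rw [d_wMap, map_zero, add_zero] at hid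
  have hr : sMap D n (rMap D n (wMap C D F n h)) = 0 := by
    rw [r_wMap, map_zero]
  rw [hr, sub_zero] at hid
  exact hid

end Star


section CastLin

noncomputable def castLin {a b : ℤ} (h : a = b) : (C.X a : Type) →ₗ[K] C.X b where
  toFun x := h ▸ x
  map_add' x y := by subst h; rfl
  map_smul' r x := by subst h; rfl

@[simp] lemma castLin_self {a : ℤ} (h : a = a) (x : C.X a) : castLin C h x = x := rfl

lemma castLin_castLin {a b c : ℤ} (h1 : a = b) (h2 : b = c) (x : C.X a) :
    castLin C h2 (castLin C h1 x) = castLin C (h1.trans h2) x := by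
  subst h1; subst h2; rfl

lemma d_castLin {a b : ℤ} (h : a = b) (j : ℤ) (x : C.X a) :
    C.d b j (castLin C h x) = C.d a j x := by subst h; rfl

lemma f_castLin (D : CochainComplex (ModuleCat.{0} K) ℤ) (F : C ⟶ D) {a b : ℤ} (h : a = b)
    (x : C.X a) : F.f b (castLin C h x) = castLin D h (F.f a x) := by subst h; rfl

lemma tMap_index_congr {i i' j : ℤ} (h1 : i = j - 1) (h2 : i' = j - 1) (hii : i = i')
    (y : C.X j) :
    castLin C hii (tMap C i j h1 y) = tMap C i' j h2 y := by
  subst hii; rfl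

end CastLin

section Q

/-- underlying type of the homotopy-pullback complex -/
abbrev QT (n : ℤ) : Type := ↑(C.X n) × ↑(C.X (n-1)) × ↑(C.homology n)

noncomputable def QdAux (n : ℤ) :
    (QT C n) →ₗ[K] (QT C (n+1)) where
  toFun v := (C.d n (n+1) v.1,
    castLin C (by omega) (v.1 - sMap C n v.2.2 - C.d (n-1) n v.2.1), 0)
  map_add' v w := by
    refine Prod.ext ?_ (Prod.ext ?_ ?_)
    · show C.d n (n+1) (v.1 + w.1) = _
      rw [map_add]; rfl
    · show castLin C _ ((v.1 + w.1) - sMap C n (v.2.2 + w.2.2) - C.d (n-1) n (v.2.1 + w.2.1)) = _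
      rw [map_add, map_add]
      rw [show (v.1 + w.1) - (sMap C n v.2.2 + sMap C n w.2.2) - (C.d (n-1) n v.2.1 + C.d (n-1) n w.2.1)
        = (v.1 - sMap C n v.2.2 - C.d (n-1) n v.2.1) + (w.1 - sMap C n w.2.2 - C.d (n-1) n w.2.1) from by abel]
      rw [map_add]; rfl
    · show (0 : C.homology (n+1)) = 0 + 0
      rw [add_zero]
  map_smul' r v := by
    refine Prod.ext ?_ (Prod.ext ?_ ?_)
    · show C.d n (n+1) (r • v.1) = _
      rw [map_smul]; rfl
    · show castLin C _ ((r • v.1) - sMap C n (r • v.2.2) - C.d (n-1) n (r • v.2.1)) = _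
      rw [map_smul, map_smul]
      rw [show (r • v.1) - (r • sMap C n v.2.2) - (r • C.d (n-1) n v.2.1)
        = r • (v.1 - sMap C n v.2.2 - C.d (n-1) n v.2.1) from by
          rw [smul_sub, smul_sub]]
      rw [map_smul]; rfl
    · show (0 : C.homology (n+1)) = r • 0
      rw [smul_zero]

noncomputable def Qcx : CochainComplex (ModuleCat.{0} K) ℤ :=
  CochainComplex.of
    (fun n => ModuleCat.of K (QT C n))
    (fun n => ModuleCat.ofHom (QdAux C n))
    (fun n => by
      refine ModuleCat.hom_ext <| LinearMap.ext fun v => ?_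
      show QdAux C (n+1) (QdAux C n v) = 0
      refine Prod.ext ?_ (Prod.ext ?_ ?_)
      · show C.d (n+1) (n+1+1) (C.d n (n+1) v.1) = 0
        have := congrArg (fun f => ModuleCat.Hom.hom f v.1) (C.d_comp_d n (n+1) (n+1+1))
        exact this
      · show castLin C _ ((C.d n (n+1) v.1) - sMap C (n+1) 0 - C.d (n+1-1) (n+1)
            (castLin C _ (v.1 - sMap C n v.2.2 - C.d (n-1) n v.2.1))) = 0
        rw [map_zero, sub_zero, d_castLin]
        have hz : C.d n (n+1) v.1 - C.d n (n+1) (v.1 - sMap C n v.2.2 - C.d (n-1) n v.2.1) = 0 := by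
          rw [map_sub, map_sub, d_sMap]
          have hdd : C.d n (n+1) (C.d (n-1) n v.2.1) = 0 := by
            have h1 : (C.d (n-1) n ≫ C.d n (n+1)) v.2.1 = 0 := by
              rw [C.d_comp_d]; rfl
            exact h1
          rw [hdd, sub_zero, sub_zero, sub_self]
        rw [hz, map_zero]
      · rfl)

lemma Qcx_X (n : ℤ) : (Qcx C).X n = ModuleCat.of K (QT C n) := rfl

lemma Qcx_d_eq (a b : ℤ) (h : a + 1 = b) :
    (Qcx C).d a b = (ModuleCat.ofHom (QdAux C a) ≫ eqToHom (by rw [← h]; rfl) :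
      (Qcx C).X a ⟶ (Qcx C).X b) := by
  subst h
  erw [eqToHom_refl, Category.comp_id]
  exact CochainComplex.of_d (fun n => ModuleCat.of K (QT C n)) (fun n => ModuleCat.ofHom (QdAux C n)) a

lemma Qd_fst (a b : ℤ) (h : a + 1 = b) (v : (Qcx C).X a) :
    ((Qcx C).d a b v).1 = C.d a b v.1 := by
  subst h
  have hd : (Qcx C).d a (a+1) = ModuleCat.ofHom (QdAux C a) := CochainComplex.of_d (fun n => ModuleCat.of K (QT C n)) (fun n => ModuleCat.ofHom (QdAux C n)) a
  rw [hd]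
  rfl

lemma Qd_snd (a b : ℤ) (h : a + 1 = b) (v : (Qcx C).X a) :
    ((Qcx C).d a b v).2.1
      = castLin C (by omega) (v.1 - sMap C a v.2.2 - C.d (a-1) a v.2.1) := by
  subst h
  have hd : (Qcx C).d a (a+1) = ModuleCat.ofHom (QdAux C a) := CochainComplex.of_d (fun n => ModuleCat.of K (QT C n)) (fun n => ModuleCat.ofHom (QdAux C n)) a
  rw [hd]
  rfl

lemma Qd_trd (a b : ℤ) (h : a + 1 = b) (v : (Qcx C).X a) :
    ((Qcx C).d a b v).2.2 = 0 := by
  subst h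
  have hd : (Qcx C).d a (a+1) = ModuleCat.ofHom (QdAux C a) := CochainComplex.of_d (fun n => ModuleCat.of K (QT C n)) (fun n => ModuleCat.ofHom (QdAux C n)) a
  rw [hd]
  rfl

end Q


section Maps

noncomputable def qf (n : ℤ) : (QT C n) →ₗ[K] C.X n := LinearMap.fst K _ _

noncomputable def pf (n : ℤ) : (QT C n) →ₗ[K] C.homology n :=
  (LinearMap.snd K _ _) ∘ₗ (LinearMap.snd K (C.X n) _)

noncomputable def σf (n : ℤ) : (C.homology n : Type) →ₗ[K] QT C n :=
  LinearMap.prod (sMap C n) (LinearMap.prod 0 LinearMap.id)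

noncomputable def τf (n : ℤ) : (C.X n : Type) →ₗ[K] QT C n :=
  LinearMap.prod LinearMap.id (LinearMap.prod (tMap C (n-1) n rfl) (rMap C n))

@[simp] lemma qf_apply (n : ℤ) (v : QT C n) : qf C n v = v.1 := rfl
@[simp] lemma pf_apply (n : ℤ) (v : QT C n) : pf C n v = v.2.2 := rfl
@[simp] lemma σf_apply (n : ℤ) (h : C.homology n) : σf C n h = (sMap C n h, 0, h) := rfl
@[simp] lemma τf_apply (n : ℤ) (x : C.X n) :
    τf C n x = (x, tMap C (n-1) n rfl x, rMap C n x) := rfl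

noncomputable def qHom : Qcx C ⟶ C where
  f n := ModuleCat.ofHom (qf C n)
  comm' := by
    intro a b hab
    replace hab : a + 1 = b := hab
    refine ModuleCat.hom_ext <| LinearMap.ext fun v => ?_
    show C.d a b (v.1) = ((Qcx C).d a b v).1
    rw [Qd_fst C a b hab]

noncomputable def pHom : Qcx C ⟶ homologyComplex K C where
  f n := ModuleCat.ofHom (pf C n)
  comm' := by
    intro a b hab
    replace hab : a + 1 = b := hab
    refine ModuleCat.hom_ext <| LinearMap.ext fun v => ?_
    show (0 : (homologyComplex K C).X a ⟶ (homologyComplex K C).X b) (v.2.2)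
      = ((Qcx C).d a b v).2.2
    rw [Qd_trd C a b hab]
    rfl

noncomputable def σHom : homologyComplex K C ⟶ Qcx C where
  f n := ModuleCat.ofHom (σf C n)
  comm' := by
    intro a b hab
    replace hab : a + 1 = b := hab
    refine ModuleCat.hom_ext <| LinearMap.ext fun (h : C.homology a) => ?_
    show (Qcx C).d a b (σf C a h)
      = σf C b ((0 : (homologyComplex K C).X a ⟶ (homologyComplex K C).X b) h)
    have h3 : σf C b ((0 : (homologyComplex K C).X a ⟶ (homologyComplex K C).X b) h)
        = 0 := by
      show σf C b 0 = 0
      rw [map_zero]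
    rw [h3]
    refine Prod.ext ?_ (Prod.ext ?_ ?_)
    · erw [Qd_fst C a b hab]
      show C.d a b (sMap C a h) = (0 : QT C b).1
      rw [d_sMap]; rfl
    · erw [Qd_snd C a b hab]
      show castLin C _ ((σf C a h).1 - sMap C a (σf C a h).2.2 - C.d (a-1) a (σf C a h).2.1) = _
      rw [σf_apply]
      show castLin C _ (sMap C a h - sMap C a h - C.d (a-1) a 0) = _
      rw [map_zero, sub_zero, sub_self, map_zero]
      rfl
    · erw [Qd_trd C a b hab]; rfl

noncomputable def τHom : C ⟶ Qcx C where
  f n := ModuleCat.ofHom (τf C n)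
  comm' := by
    intro a b hab
    replace hab : a + 1 = b := hab
    refine ModuleCat.hom_ext <| LinearMap.ext fun x => ?_
    show (Qcx C).d a b (τf C a x) = τf C b (C.d a b x)
    refine Prod.ext ?_ (Prod.ext ?_ ?_)
    · rw [Qd_fst C a b hab (τf C a x)]; rfl
    · erw [Qd_snd C a b hab]
      show castLin C _ (x - sMap C a (rMap C a x) - C.d (a-1) a (tMap C (a-1) a rfl x))
        = tMap C (b-1) b rfl (C.d a b x)
      have hid := homotopy_id C (a-1) a b rfl (by omega) x
      have h4 : x - sMap C a (rMap C a x) - C.d (a-1) a (tMap C (a-1) a rfl x)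
          = tMap C a b (by omega) (C.d a b x) := by
        rw [← hid]; abel
      rw [h4]
      exact tMap_index_congr C (by omega) rfl (by omega) (C.d a b x)
    · erw [Qd_trd C a b hab]
      show (0 : C.homology b) = rMap C b (C.d a b x)
      rw [rMap_d C (by omega : a = b - 1)]

lemma τHom_comp_qHom : τHom C ≫ qHom C = 𝟙 C := by
  ext n x
  rfl

noncomputable def rHom : C ⟶ homologyComplex K C where
  f n := ModuleCat.ofHom (rMap C n)
  comm' := by
    intro a b hab
    replace hab : a + 1 = b := hab
    refine ModuleCat.hom_ext <| LinearMap.ext fun x => ?_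
    show (0 : (homologyComplex K C).X a ⟶ (homologyComplex K C).X b) (rMap C a x)
      = rMap C b (C.d a b x)
    rw [rMap_d C (by omega : a = b - 1)]
    rfl

noncomputable def sHom : homologyComplex K C ⟶ C where
  f n := ModuleCat.ofHom (sMap C n)
  comm' := by
    intro a b hab
    replace hab : a + 1 = b := hab
    refine ModuleCat.hom_ext <| LinearMap.ext fun (h : C.homology a) => ?_
    show C.d a b (sMap C a h)
      = sMap C b ((0 : (homologyComplex K C).X a ⟶ (homologyComplex K C).X b) h)
    rw [d_sMap]
    show (0 : C.X b) = sMap C b 0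
    rw [map_zero]

lemma τHom_comp_pHom : τHom C ≫ pHom C = rHom C := by
  ext n x
  rfl

lemma σHom_comp_pHom : σHom C ≫ pHom C = 𝟙 (homologyComplex K C) := by
  ext n h
  rfl

lemma sHom_comp_rHom : sHom C ≫ rHom C = 𝟙 (homologyComplex K C) := by
  ext n h
  exact rMap_sMap C n h

end Maps

section Homotopies

noncomputable def e2hom (i j : ℤ) : C.X i ⟶ C.X j :=
  if h : j = i - 1 then ModuleCat.ofHom (tMap C j i h : C.X i →ₗ[K] C.X j) else 0

lemma e2hom_eq (i j : ℤ) (h : j = i - 1) :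
    e2hom C i j = ModuleCat.ofHom (tMap C j i h : C.X i →ₗ[K] C.X j) := dif_pos h

noncomputable def Te2 : Homotopy (rHom C ≫ sHom C) (𝟙 C) := Homotopy.symm
  { hom := fun i j => e2hom C i j
    zero := fun i j w => by
      refine dif_neg fun h => w ?_
      show j + 1 = i
      omega
    comm := fun i => by
      rw [dNext_eq _ (show (ComplexShape.up ℤ).Rel i (i+1) from rfl),
          prevD_eq _ (show (ComplexShape.up ℤ).Rel (i-1) i from (by omega : (i-1)+1 = i))]
      rw [e2hom_eq C (i+1) i (by omega), e2hom_eq C i (i-1) rfl]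
      refine ModuleCat.hom_ext <| LinearMap.ext fun x => ?_
      show x = tMap C i (i+1) (by omega) (C.d i (i+1) x)
          + C.d (i-1) i (tMap C (i-1) i rfl x) + sMap C i (rMap C i x)
      have hid := homotopy_id C (i-1) i (i+1) rfl (by omega) x
      have h5 : tMap C i (i+1) (by omega : i = (i+1) - 1) (C.d i (i+1) x)
          + C.d (i-1) i (tMap C (i-1) i rfl x) + sMap C i (rMap C i x)
          = (C.d (i-1) i (tMap C (i-1) i rfl x)
              + tMap C i (i+1) (by omega : i = (i+1) - 1) (C.d i (i+1) x))
            + sMap C i (rMap C i x) := by abel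
      rw [h5, hid]
      abel }

noncomputable def TQ (i j : ℤ) (h : j = i - 1) : (Qcx C).X i ⟶ (Qcx C).X j :=
  ModuleCat.ofHom (LinearMap.prod ((castLin C (by omega : i - 1 = j)) ∘ₗ
      ((LinearMap.fst K (C.X (i-1)) _) ∘ₗ (LinearMap.snd K (C.X i) _)))
    (LinearMap.prod 0 0) : QT C i →ₗ[K] QT C j)

lemma TQ_apply (i j : ℤ) (h : j = i - 1) (v : (Qcx C).X i) :
    TQ C i j h v = (castLin C (by omega : i - 1 = j) v.2.1, 0, 0) := rfl

noncomputable def e1hom (i j : ℤ) : (Qcx C).X i ⟶ (Qcx C).X j :=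
  if h : j = i - 1 then (TQ C i j h : (Qcx C).X i ⟶ (Qcx C).X j) else 0

lemma e1hom_eq (i j : ℤ) (h : j = i - 1) :
    e1hom C i j = (TQ C i j h : (Qcx C).X i ⟶ (Qcx C).X j) := dif_pos h

noncomputable def Te1 : Homotopy (pHom C ≫ σHom C) (𝟙 (Qcx C)) := Homotopy.symm
  { hom := fun i j => e1hom C i j
    zero := fun i j w => by
      refine dif_neg fun h => w ?_
      show j + 1 = i
      omega
    comm := fun i => by
      rw [dNext_eq _ (show (ComplexShape.up ℤ).Rel i (i+1) from rfl),
          prevD_eq _ (show (ComplexShape.up ℤ).Rel (i-1) i from (by omega : (i-1)+1 = i))]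
      rw [e1hom_eq C (i+1) i (by omega), e1hom_eq C i (i-1) rfl]
      refine ModuleCat.hom_ext <| LinearMap.ext fun v => ?_
      show v = TQ C (i+1) i (by omega) ((Qcx C).d i (i+1) v)
          + (Qcx C).d (i-1) i (TQ C i (i-1) rfl v)
          + ((pHom C ≫ σHom C).f i) v
      have h1 : TQ C (i+1) i (by omega : i = (i+1) - 1) ((Qcx C).d i (i+1) v)
          = (v.1 - sMap C i v.2.2 - C.d (i-1) i v.2.1, 0, 0) := by
        rw [TQ_apply]
        refine Prod.ext ?_ rfl
        show castLin C (show (i+1) - 1 = i by omega) (((Qcx C).d i (i+1) v).2.1) = _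
        rw [Qd_snd C i (i+1) rfl v, castLin_castLin, castLin_self]
      have h2 : (Qcx C).d (i-1) i (TQ C i (i-1) rfl v)
          = ((C.d (i-1) i v.2.1, v.2.1, 0) : QT C i) := by
        refine Prod.ext ?_ (Prod.ext ?_ ?_)
        · rw [Qd_fst C (i-1) i (by omega)]
          show C.d (i-1) i (castLin C (show i - 1 = i - 1 from rfl) v.2.1) = _
          rw [castLin_self]
        · rw [Qd_snd C (i-1) i (by omega)]
          show castLin C (show i - 1 = i - 1 from rfl)
              ((TQ C i (i-1) rfl v).1 - sMap C (i-1) (TQ C i (i-1) rfl v).2.2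
              - C.d (i-1-1) (i-1) (TQ C i (i-1) rfl v).2.1) = v.2.1
          rw [TQ_apply]
          show castLin C (show i - 1 = i - 1 from rfl)
              (castLin C (show i - 1 = i - 1 from rfl) v.2.1 - sMap C (i-1) 0
                - C.d (i-1-1) (i-1) 0) = v.2.1
          rw [map_zero, map_zero, sub_zero, sub_zero, castLin_castLin, castLin_self]
        · rw [Qd_trd C (i-1) i (by omega)]
      rw [h1, h2]
      refine Prod.ext ?_ (Prod.ext ?_ ?_)
      · show v.1 = (v.1 - sMap C i v.2.2 - C.d (i-1) i v.2.1)
            + C.d (i-1) i v.2.1 + sMap C i v.2.2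
        abel
      · show v.2.1 = 0 + v.2.1 + 0
        abel
      · show v.2.2 = 0 + 0 + v.2.2
        abel }

noncomputable def E1 : HomotopyEquiv (Qcx C) (homologyComplex K C) where
  hom := pHom C
  inv := σHom C
  homotopyHomInvId := Te1 C
  homotopyInvHomId := Homotopy.ofEq (σHom_comp_pHom C)

noncomputable def E2 : HomotopyEquiv C (homologyComplex K C) where
  hom := rHom C
  inv := sHom C
  homotopyHomInvId := Te2 C
  homotopyInvHomId := Homotopy.ofEq (sHom_comp_rHom C)

lemma quasiIso_pHom : QuasiIso (pHom C) := inferInstanceAs (QuasiIso (E1 C).hom)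

lemma quasiIso_rHom : QuasiIso (rHom C) := inferInstanceAs (QuasiIso (E2 C).hom)

lemma quasiIso_sHom : QuasiIso (sHom C) := inferInstanceAs (QuasiIso (E2 C).inv)

lemma quasiIso_τHom : QuasiIso (τHom C) := by
  haveI := quasiIso_pHom C
  haveI : QuasiIso (τHom C ≫ pHom C) := by
    rw [τHom_comp_pHom]; exact quasiIso_rHom C
  exact quasiIso_of_comp_right (τHom C) (pHom C)

lemma quasiIso_qHom : QuasiIso (qHom C) := by
  haveI := quasiIso_τHom C
  haveI : QuasiIso (τHom C ≫ qHom C) := by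
    rw [τHom_comp_qHom]; infer_instance
  exact quasiIso_of_comp_left (τHom C) (qHom C)

end Homotopies


section Psi

variable (D : CochainComplex (ModuleCat.{0} K) ℤ) (F : C ⟶ D)

noncomputable def ψf (n : ℤ) : QT C n →ₗ[K] QT D n :=
  LinearMap.prod
    ((show (C.X n : Type) →ₗ[K] D.X n from (F.f n).hom) ∘ₗ LinearMap.fst K _ _)
    (LinearMap.prod
      ((show (C.X (n-1) : Type) →ₗ[K] D.X (n-1) from (F.f (n-1)).hom) ∘ₗ
          (LinearMap.fst K (↑(C.X (n-1))) _ ∘ₗ LinearMap.snd K (↑(C.X n)) _)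
        + (kMap C D F (n-1) n rfl) ∘ₗ
          (LinearMap.snd K (↑(C.X (n-1))) _ ∘ₗ LinearMap.snd K (↑(C.X n)) _))
      ((show (C.homology n : Type) →ₗ[K] D.homology n from
          (HomologicalComplex.homologyMap F n).hom) ∘ₗ
          (LinearMap.snd K (↑(C.X (n-1))) _ ∘ₗ LinearMap.snd K (↑(C.X n)) _)))

lemma ψf_apply (n : ℤ) (v : QT C n) :
    ψf C D F n v = (F.f n v.1,
      F.f (n-1) v.2.1 + kMap C D F (n-1) n rfl v.2.2,
      HomologicalComplex.homologyMap F n v.2.2) := rfl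

noncomputable def ψHom : Qcx C ⟶ Qcx D where
  f n := ModuleCat.ofHom (ψf C D F n)
  comm' := by
    intro a b hab
    replace hab : a + 1 = b := hab
    refine ModuleCat.hom_ext <| LinearMap.ext fun (v : QT C a) => ?_
    show (Qcx D).d a b (ψf C D F a v) = ψf C D F b ((Qcx C).d a b v)
    refine Prod.ext ?_ (Prod.ext ?_ ?_)
    · erw [Qd_fst D a b hab]
      show D.d a b ((ψf C D F a v).1) = (ψf C D F b ((Qcx C).d a b v)).1
      erw [ψf_apply, ψf_apply]
      show D.d a b (F.f a v.1) = F.f b (((Qcx C).d a b v).1)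
      erw [Qd_fst C a b hab]
      have hc : (F.f a ≫ D.d a b) v.1 = (C.d a b ≫ F.f b) v.1 := by rw [F.comm]
      exact hc
    · erw [Qd_snd D a b hab]
      show castLin D (show a = b - 1 by omega)
          ((ψf C D F a v).1 - sMap D a ((ψf C D F a v).2.2)
            - D.d (a-1) a ((ψf C D F a v).2.1))
        = (ψf C D F b ((Qcx C).d a b v)).2.1
      rw [ψf_apply]
      show castLin D (show a = b - 1 by omega)
          (F.f a v.1 - sMap D a (HomologicalComplex.homologyMap F a v.2.2)
            - D.d (a-1) a (F.f (a-1) v.2.1 + kMap C D F (a-1) a rfl v.2.2))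
        = F.f (b-1) (((Qcx C).d a b v).2.1)
          + kMap C D F (b-1) b rfl (((Qcx C).d a b v).2.2)
      erw [Qd_snd C a b hab, Qd_trd C a b hab, map_zero, add_zero,
        f_castLin C D F (show a = b - 1 by omega)]
      refine congrArg (castLin D (show a = b - 1 by omega)) ?_
      rw [map_add (ConcreteCategory.hom (D.d (a-1) a)), d_kMap C D F (a-1) a rfl, wMap_apply]
      have hc : D.d (a-1) a (F.f (a-1) v.2.1) = F.f a (C.d (a-1) a v.2.1) := by
        have h2 : (F.f (a-1) ≫ D.d (a-1) a) v.2.1 = (C.d (a-1) a ≫ F.f a) v.2.1 := by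
          rw [F.comm]
        exact h2
      rw [hc, map_sub, map_sub]
      abel
    · erw [Qd_trd D a b hab]
      show (0 : D.homology b)
        = HomologicalComplex.homologyMap F b (((Qcx C).d a b v).2.2)
      erw [Qd_trd C a b hab, map_zero]

lemma ψHom_comp_qHom : ψHom C D F ≫ qHom D = qHom C ≫ F := by
  ext n v
  rfl

end Psi


section MkFunctor

universe v u
variable {CC : Type u} [Category.{v} CC] (obj : ℤ → CC) (step : ∀ i : ℤ, obj i ⟶ obj (i+1))

/-- composite of `n` steps from `i` to `j`. -/
noncomputable def mapH : (n : ℕ) → {i j : ℤ} → (i + (n : ℤ) = j) → (obj i ⟶ obj j)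
  | 0, i, j, h => eqToHom (congrArg obj (by omega))
  | (n+1), i, j, h =>
      mapH n (show i + (n : ℤ) = j - 1 by push_cast at h ⊢; omega) ≫
        (step (j-1) ≫ eqToHom (congrArg obj (show j - 1 + 1 = j by omega)))

lemma mapH_comp (m n : ℕ) {i j k : ℤ} (hij : i + (m : ℤ) = j) (hjk : j + (n : ℤ) = k) :
    mapH obj step (m + n) (show i + ((m + n : ℕ) : ℤ) = k by push_cast at hij hjk ⊢; omega)
      = mapH obj step m hij ≫ mapH obj step n hjk := by
  induction n generalizing k with
  | zero =>
    obtain rfl : j = k := by omega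
    show mapH obj step m _ = mapH obj step m hij ≫ eqToHom _
    simp
  | succ n ih =>
    show mapH obj step (m + n) _ ≫ (step (k-1) ≫ eqToHom _)
      = mapH obj step m hij ≫ (mapH obj step n _ ≫ (step (k-1) ≫ eqToHom _))
    exact (congrArg (· ≫ (step (k-1) ≫ eqToHom (congrArg obj (show k - 1 + 1 = k by omega))))
      (ih (show j + (n : ℤ) = k - 1 by push_cast at hjk ⊢; omega))).trans
        (Category.assoc _ _ _)

lemma mapH_zero {i j : ℤ} (h : i + ((0:ℕ) : ℤ) = j) :
    mapH obj step 0 h = eqToHom (congrArg obj (by omega : i = j)) := rfl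

lemma mapH_succ (n : ℕ) {i j : ℤ} (h : i + ((n+1 : ℕ) : ℤ) = j) :
    mapH obj step (n+1) h
      = mapH obj step n (show i + (n : ℤ) = j - 1 by push_cast at h ⊢; omega) ≫
          (step (j-1) ≫ eqToHom (congrArg obj (show j - 1 + 1 = j by omega))) := rfl

lemma mapH_congr_n {m n : ℕ} (hmn : m = n) {i j : ℤ} (hm : i + (m : ℤ) = j) :
    mapH obj step m hm = mapH obj step n (by omega) := by
  subst hmn; rfl

/-- Functor `ℤ ⥤ CC` from a sequence of one-step morphisms. -/
noncomputable def mkFunctor : ℤ ⥤ CC where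
  obj := obj
  map {i j} φ := mapH obj step (j - i).toNat (by have := leOfHom φ; omega)
  map_id i := by
    have key : ∀ (n : ℕ) (h : (i : ℤ) + (n : ℤ) = i), mapH obj step n h = 𝟙 (obj i) := by
      intro n h
      obtain rfl : n = 0 := by omega
      show eqToHom _ = 𝟙 _
      simp
    exact key _ _
  map_comp {i j k} φ ψ := by
    have h1 : (i : ℤ) + ((j - i).toNat : ℤ) = j := by have := leOfHom φ; omega
    have h2 : (j : ℤ) + ((k - j).toNat : ℤ) = k := by have := leOfHom ψ; omega
    have hcomp := mapH_comp obj step (j-i).toNat (k-j).toNat h1 h2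
    have hnn : (k - i).toNat = (j - i).toNat + (k - j).toNat := by
      have := leOfHom φ; have := leOfHom ψ; omega
    exact (mapH_congr_n obj step hnn _).trans hcomp

lemma mkFunctor_obj (i : ℤ) : (mkFunctor obj step).obj i = obj i := rfl

/-- Natural transformation out of `mkFunctor` from components compatible with steps. -/
noncomputable def mkNat (G : ℤ ⥤ CC) (a : ∀ i, obj i ⟶ G.obj i)
    (ha : ∀ i : ℤ, step i ≫ a (i+1) = a i ≫ G.map (homOfLE (by omega : i ≤ i + 1))) :
    mkFunctor obj step ⟶ G where
  app i := a i
  naturality {i j} φ := by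
    have acongr : ∀ {x y : ℤ} (h : x = y),
        eqToHom (congrArg obj h) ≫ a y = a x ≫ eqToHom (congrArg G.obj h) := by
      intro x y h; subst h; simp
    have key : ∀ (n : ℕ) (i j : ℤ) (h : (i : ℤ) + (n : ℤ) = j),
        mapH obj step n h ≫ a j = a i ≫ G.map (homOfLE (by omega : i ≤ j)) := by
      intro n
      induction n with
      | zero =>
        intro i j h
        obtain rfl : i = j := by omega
        rw [mapH_zero, acongr rfl]
        simp only [eqToHom_refl, Category.comp_id]
        have hG : G.map (homOfLE (by omega : i ≤ i)) = 𝟙 _ := by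
          rw [show (homOfLE (by omega : i ≤ i)) = 𝟙 i from Subsingleton.elim _ _, G.map_id]
        rw [hG, Category.comp_id]
      | succ n ih =>
        intro i j h
        rw [mapH_succ]
        have hstep : (step (j-1) ≫ eqToHom (congrArg obj (show j - 1 + 1 = j by omega))) ≫ a j
            = a (j-1) ≫ G.map (homOfLE (by omega : j - 1 ≤ j)) := by
          rw [Category.assoc, acongr (show j - 1 + 1 = j by omega), ← Category.assoc,
            ha (j-1), Category.assoc, ← eqToHom_map G (show j - 1 + 1 = j by omega),
            ← G.map_comp]
          exact congrArg (fun t => a (j-1) ≫ G.map t) (Subsingleton.elim _ _)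
        rw [Category.assoc, hstep, ← Category.assoc,
          ih i (j-1) (by push_cast at h ⊢; omega), Category.assoc, ← G.map_comp]
        exact congrArg (fun t => a i ≫ G.map t) (Subsingleton.elim _ _)
    have hkey := key (j - i).toNat i j (by have := leOfHom φ; omega)
    have hφ : φ = homOfLE (by have := leOfHom φ; omega : i ≤ j) := Subsingleton.elim _ _
    rw [hφ]
    exact hkey

end MkFunctor


end PFproof

/-- formality of persistence dg modules over `ℤ`: for every persistence dg
module `X` there are a persistence dg module `Q` and natural transformations `Q ⟶ X` and
`Q ⟶ H(X)` whose components are all quasi-isomorphisms; in particular `X` is connected to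
its cohomology `H(X)` (with zero differentials) by a zigzag of quasi-isomorphisms. -/
theorem persistence_dg_module_formal (K : Type) [Field K] (X : PersDGZ K) :
    ∃ (Q : PersDGZ K) (f : Q ⟶ X) (g : Q ⟶ Hpers K X),
      (∀ i : ℤ, QuasiIso (f.app i)) ∧ (∀ i : ℤ, QuasiIso (g.app i)) ∧
      ZigzagQIso K X (Hpers K X) := by
  classical
  let obj : ℤ → CochainComplex (ModuleCat.{0} K) ℤ := fun i => PFproof.Qcx (X.obj i)
  let step : ∀ i : ℤ, obj i ⟶ obj (i+1) :=
    fun i => PFproof.ψHom (X.obj i) (X.obj (i+1)) (X.map (homOfLE (by omega : i ≤ i + 1)))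
  let Q : PersDGZ K := PFproof.mkFunctor obj step
  let f : Q ⟶ X := PFproof.mkNat obj step X (fun i => PFproof.qHom (X.obj i))
    (fun i => PFproof.ψHom_comp_qHom (X.obj i) (X.obj (i+1)) (X.map (homOfLE (by omega))))
  let g : Q ⟶ Hpers K X := PFproof.mkNat obj step (Hpers K X)
    (fun i => PFproof.pHom (X.obj i))
    (fun i => by ext n v; rfl)
  have hf : ∀ i : ℤ, QuasiIso (f.app i) := fun i => PFproof.quasiIso_qHom (X.obj i)
  have hg : ∀ i : ℤ, QuasiIso (g.app i) := fun i => PFproof.quasiIso_pHom (X.obj i)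
  exact ⟨Q, f, g, hf, hg,
    Relation.ReflTransGen.head (Or.inr ⟨f, hf⟩)
      (Relation.ReflTransGen.single (Or.inl ⟨g, hg⟩))⟩
end

section
/- Let X and Y be persistence dg modules over ℤ and m a non-negative integer. If H(X) and H(Y) (each with zero differential) are m-interleaved, then X and Y are m-homotopy interleaved: there exist persistence dg modules X' and Y' over ℤ such that X is connected to X' by a zigzag of quasi-isomorphisms, Y is connected to Y' by a zigzag of quasi-isomorphisms, and X' and Y' are m-interleaved. -/
open CategoryTheory Category CategoryTheory.Limits

/-- The shift functor `T_m : (ℤ, ≤) → (ℤ, ≤)`, `i ↦ i + m`. -/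
noncomputable def shiftZ (m : ℤ) : ℤ ⥤ ℤ :=
  (show Monotone (fun a : ℤ => a + m) from fun _ _ h => Int.add_le_add_right h m).functor

/-- `X` and `Y` are `m`-interleaved persistence dg modules over `ℤ`. -/
def DGInterleaved (K : Type) [Field K] (m : ℤ) (X Y : PersDGZ K) : Prop :=
  0 ≤ m ∧
    ∃ (φ : X ⟶ shiftZ m ⋙ Y) (ψ : Y ⟶ shiftZ m ⋙ X),
      (∀ (i : ℤ) (h : i ≤ i + m + m), φ.app i ≫ ψ.app (i + m) = X.map (homOfLE h)) ∧
      (∀ (i : ℤ) (h : i ≤ i + m + m), ψ.app i ≫ φ.app (i + m) = Y.map (homOfLE h))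


section Formality

variable {K : Type} [Field K]

lemma exists_genInv {V W : ModuleCat.{0} K} (φ : V ⟶ W) :
    ∃ ψ : W ⟶ V, φ ≫ ψ ≫ φ = φ := by
  obtain ⟨Q, hQ⟩ := Submodule.exists_isCompl (LinearMap.range φ.hom)
  obtain ⟨g, hg⟩ := φ.hom.rangeRestrict.exists_rightInverse_of_surjective φ.hom.range_rangeRestrict
  refine ⟨ModuleCat.ofHom (g.comp ((LinearMap.range φ.hom).linearProjOfIsCompl Q hQ)), ?_⟩
  ext x
  have h1 : ((LinearMap.range φ.hom).linearProjOfIsCompl Q hQ) (φ.hom x) =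
      ⟨φ.hom x, LinearMap.mem_range_self φ.hom x⟩ :=
    Submodule.linearProjOfIsCompl_apply_left hQ ⟨φ.hom x, LinearMap.mem_range_self φ.hom x⟩
  show φ.hom (g (((LinearMap.range φ.hom).linearProjOfIsCompl Q hQ) (φ.hom x))) = φ.hom x
  rw [h1]
  have h2 := LinearMap.ext_iff.1 hg ⟨φ.hom x, LinearMap.mem_range_self φ.hom x⟩
  have h3 : φ.hom (g ⟨φ.hom x, LinearMap.mem_range_self φ.hom x⟩) =
      (φ.hom.rangeRestrict (g ⟨φ.hom x, LinearMap.mem_range_self φ.hom x⟩) : W) := rfl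
  rw [h3]
  rw [LinearMap.comp_apply] at h2
  rw [h2]
  rfl

variable (C : CochainComplex (ModuleCat.{0} K) ℤ)

/-- generalized inverse of the incoming differential -/
noncomputable def gi (n : ℤ) : C.X n ⟶ C.X (n - 1) :=
  (exists_genInv (C.d (n - 1) n)).choose

lemma gi_spec (n : ℤ) : C.d (n - 1) n ≫ gi C n ≫ C.d (n - 1) n = C.d (n - 1) n :=
  (exists_genInv (C.d (n - 1) n)).choose_spec

lemma d_congr_dom {i i' j : ℤ} (h : i = i') :
    C.d i j = eqToHom (congrArg C.X h) ≫ C.d i' j := by subst h; simp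

noncomputable def giup (n : ℤ) : C.X (n + 1) ⟶ C.X n :=
  gi C (n + 1) ≫ eqToHom (congrArg C.X (by ring : n + 1 - 1 = n))

lemma giup_spec_aux (n k : ℤ) (h : k = n) (g : C.X (n + 1) ⟶ C.X k)
    (hs : C.d k (n + 1) ≫ g ≫ C.d k (n + 1) = C.d k (n + 1)) :
    C.d n (n + 1) ≫ (g ≫ eqToHom (congrArg C.X h)) ≫ C.d n (n + 1) = C.d n (n + 1) := by
  subst h
  simpa using hs

lemma giup_spec (n : ℤ) : C.d n (n + 1) ≫ giup C n ≫ C.d n (n + 1) = C.d n (n + 1) :=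
  giup_spec_aux C n (n + 1 - 1) (by ring) (gi C (n + 1)) (gi_spec C (n + 1))

/-- the "projection onto a complement of boundaries+anticycles" map -/
noncomputable def rmap (n : ℤ) : C.X n ⟶ C.X n :=
  𝟙 _ - C.d n (n + 1) ≫ giup C n - gi C n ≫ C.d (n - 1) n

lemma rmap_d (n : ℤ) : rmap C n ≫ C.d n (n + 1) = 0 := by
  simp only [rmap, Preadditive.sub_comp, Category.id_comp, Category.assoc]
  rw [giup_spec]
  simp

lemma d_rmap (n : ℤ) : C.d n (n + 1) ≫ rmap C (n + 1) = 0 := by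
  have h : (n + 1 - 1 : ℤ) = n := by ring
  simp only [rmap, Preadditive.comp_sub, Category.comp_id]
  rw [d_congr_dom C (j := n + 1) h]
  have : C.d n (n + 1) ≫ gi C (n + 1) ≫ eqToHom (congrArg C.X h) ≫ C.d n (n + 1) =
      C.d n (n + 1) := by
    have := giup_spec C n
    simpa [giup, Category.assoc] using this
  rw [this]
  simp

noncomputable def etaf (n : ℤ) : C.X n ⟶ C.homology n :=
  C.liftCycles (rmap C n) (n + 1) (CochainComplex.next ℤ n) (rmap_d C n) ≫ C.homologyπ n

lemma d_etaf (n : ℤ) : C.d n (n + 1) ≫ etaf C (n + 1) = 0 := by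
  have h : C.d n (n + 1) ≫ C.liftCycles (rmap C (n + 1)) (n + 1 + 1)
      (CochainComplex.next ℤ (n + 1)) (rmap_d C (n + 1)) = 0 := by
    rw [← cancel_mono (C.iCycles (n + 1))]
    simp [d_rmap]
  rw [etaf, ← Category.assoc, h, zero_comp]

lemma iCycles_etaf (n : ℤ) : C.iCycles n ≫ etaf C n = C.homologyπ n := by
  have h1 : C.iCycles n ≫ C.liftCycles (rmap C n) (n + 1) (CochainComplex.next ℤ n)
      (rmap_d C n) = 𝟙 _ - (C.iCycles n ≫ gi C n) ≫ C.toCycles (n - 1) n := by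
    rw [← cancel_mono (C.iCycles n)]
    simp only [Category.assoc, HomologicalComplex.liftCycles_i, Preadditive.sub_comp,
      Category.id_comp, HomologicalComplex.toCycles_i]
    simp [rmap, Preadditive.comp_sub]
  rw [etaf, ← Category.assoc, h1]
  simp

noncomputable def etaHom : C ⟶ homologyComplex K C where
  f n := etaf C n
  comm' i j hij := by
    obtain rfl : i + 1 = j := hij
    show etaf C i ≫ (homologyComplex K C).d i (i + 1) = C.d i (i + 1) ≫ etaf C (i + 1)
    rw [d_etaf]
    rfl

lemma quasiIso_etaHom : QuasiIso (etaHom C) := by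
  constructor
  intro n
  rw [quasiIsoAt_iff_isIso_homologyMap]
  have h2 : IsIso ((homologyComplex K C).homologyπ n) :=
    (homologyComplex K C).isIso_homologyπ (n - 1) n (CochainComplex.prev ℤ n) rfl
  have h3 : IsIso ((homologyComplex K C).iCycles n) :=
    (homologyComplex K C).isIso_iCycles n (n + 1) (CochainComplex.next ℤ n) rfl
  have key : HomologicalComplex.homologyMap (etaHom C) n ≫
      (inv ((homologyComplex K C).homologyπ n) ≫ (homologyComplex K C).iCycles n) = 𝟙 _ := by
    refine (cancel_epi (C.homologyπ n)).1 ?_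
    erw [Category.comp_id, ← Category.assoc,
      HomologicalComplex.homologyπ_naturality, Category.assoc, IsIso.hom_inv_id_assoc,
      HomologicalComplex.cyclesMap_i]
    exact iCycles_etaf C n
  have h4 : HomologicalComplex.homologyMap (etaHom C) n =
      inv (inv ((homologyComplex K C).homologyπ n) ≫ (homologyComplex K C).iCycles n) := by
    refine (cancel_mono (inv ((homologyComplex K C).homologyπ n) ≫
      (homologyComplex K C).iCycles n)).1 ?_
    erw [key, IsIso.inv_hom_id]
  rw [h4]
  exact @IsIso.inv_isIso _ _ _ _ _ (@IsIso.comp_isIso _ _ _ _ _ _ _ (@IsIso.inv_isIso _ _ _ _ _ h2) h3)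

end Formality


section Helpers

variable {K : Type} [Field K]

def homFun {C D : CochainComplex (ModuleCat.{0} K) ℤ}
    (θ : ∀ n : ℤ, C.X n ⟶ D.X (n - 1)) : ∀ i j : ℤ, C.X i ⟶ D.X j := fun i j =>
  if h : j = i - 1 then θ i ≫ eqToHom (congrArg D.X h.symm) else 0

/-- Build a homotopy for cochain complexes over `ℤ` from degreewise data. -/
def mkHomotopy {C D : CochainComplex (ModuleCat.{0} K) ℤ} (f g : C ⟶ D)
    (θ : ∀ n : ℤ, C.X n ⟶ D.X (n - 1))
    (comm : ∀ (n : ℤ) (v : C.X n), f.f n v =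
      (eqToHom (congrArg D.X (show n + 1 - 1 = n by ring)) : D.X (n + 1 - 1) ⟶ D.X n)
          (θ (n + 1) (C.d n (n + 1) v)) +
        D.d (n - 1) n (θ n v) + g.f n v) :
    Homotopy f g where
  hom := homFun θ
  zero i j hij := dif_neg (fun h => hij (show j + 1 = i by omega))
  comm n := by
    rw [dNext_eq _ (show (n : ℤ) + 1 = n + 1 from rfl),
      prevD_eq _ (show (n : ℤ) - 1 + 1 = n by ring)]
    have e1 : homFun θ (n + 1) n = θ (n + 1) ≫
        eqToHom (congrArg D.X (show n + 1 - 1 = n by ring)) :=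
      dif_pos (show (n : ℤ) = n + 1 - 1 by ring)
    have e2 : homFun θ n (n - 1) = θ n ≫ eqToHom (congrArg D.X rfl) := dif_pos rfl
    rw [e1, e2]
    ext v
    show f.f n v = (eqToHom (congrArg D.X (show n + 1 - 1 = n by ring)) :
        D.X (n + 1 - 1) ⟶ D.X n) (θ (n + 1) (C.d n (n + 1) v)) +
      D.d (n - 1) n ((eqToHom (congrArg D.X (rfl : ((n : ℤ) - 1) = n - 1)) :
        D.X (n - 1) ⟶ D.X (n - 1)) (θ n v)) + g.f n v
    have e3 : (eqToHom (congrArg D.X (rfl : ((n : ℤ) - 1) = n - 1)) :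
        D.X (n - 1) ⟶ D.X (n - 1)) (θ n v) = θ n v := rfl
    rw [e3]
    exact comm n v

lemma vanish_on_cycles {C : CochainComplex (ModuleCat.{0} K) ℤ} {M : ModuleCat.{0} K} {n : ℤ}
    (ψ : C.X n ⟶ M) (hψ : C.iCycles n ≫ ψ = 0) (x : C.X n) (hx : C.d n (n + 1) x = 0) :
    ψ x = 0 := by
  let φx : ModuleCat.of K K ⟶ C.X n := ModuleCat.ofHom (LinearMap.toSpanSingleton K _ x)
  have hφ : φx ≫ C.d n (n + 1) = 0 := by
    apply ModuleCat.hom_ext; apply LinearMap.ext; intro a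
    show C.d n (n + 1) (a • x) = 0
    rw [map_smul, hx, smul_zero]
  have h2 : φx ≫ ψ = 0 := by
    rw [← C.liftCycles_i φx (n + 1) (CochainComplex.next ℤ n) hφ, Category.assoc, hψ,
      comp_zero]
  have h4 : ψ ((LinearMap.toSpanSingleton K _ x) (1 : K)) = 0 := by
    simpa [φx] using ConcreteCategory.congr_hom h2 (1 : K)
  rwa [LinearMap.toSpanSingleton_apply_one] at h4

end Helpers

namespace ZFunctor

variable {V : Type*} [Category V]

def auxMap (obj : ℤ → V) (mp : ∀ i : ℤ, obj i ⟶ obj (i + 1)) :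
    ∀ (n : ℕ) (i j : ℤ), i + n = j → (obj i ⟶ obj j)
  | 0, _, _, h => eqToHom (congrArg obj (by omega))
  | (n + 1), i, j, h => mp i ≫ auxMap obj mp n (i + 1) j (by omega)

lemma auxMap_irrel (obj : ℤ → V) (mp : ∀ i : ℤ, obj i ⟶ obj (i + 1))
    (n n' : ℕ) (i j : ℤ) (h : i + n = j) (h' : i + n' = j) :
    auxMap obj mp n i j h = auxMap obj mp n' i j h' := by
  have : n = n' := by omega
  subst this; rfl

lemma auxMap_comp (obj : ℤ → V) (mp : ∀ i : ℤ, obj i ⟶ obj (i + 1)) :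
    ∀ (m n : ℕ) (i j k : ℤ) (h : i + m = j) (h' : j + n = k),
    auxMap obj mp (m + n) i k (by omega) =
      auxMap obj mp m i j h ≫ auxMap obj mp n j k h' := by
  intro m
  induction m with
  | zero =>
    intro n i j k h h'
    have hij : i = j := by omega
    subst hij
    rw [auxMap_irrel obj mp (0 + n) n i k _ (by omega)]
    simp [auxMap]
  | succ m ih =>
    intro n i j k h h'
    rw [auxMap_irrel obj mp (m + 1 + n) ((m + n) + 1) i k _ (by omega)]
    show mp i ≫ auxMap obj mp (m + n) (i + 1) k _ = auxMap obj mp (m + 1) i j h ≫ _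
    rw [ih n (i + 1) j k (by omega) h']
    show _ = (mp i ≫ auxMap obj mp m (i + 1) j _) ≫ _
    rw [Category.assoc]

def mk (obj : ℤ → V) (mp : ∀ i : ℤ, obj i ⟶ obj (i + 1)) : ℤ ⥤ V where
  obj := obj
  map {i j} g := auxMap obj mp (j - i).toNat i j (by have := leOfHom g; omega)
  map_id i := by
    rw [auxMap_irrel obj mp _ 0 i i _ (by omega)]
    simp [auxMap]
  map_comp {i j k} g g' := by
    have hij := leOfHom g
    have hjk := leOfHom g'
    rw [auxMap_irrel obj mp _ ((j - i).toNat + (k - j).toNat) i k _ (by omega)]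
    exact auxMap_comp obj mp _ _ i j k (by omega) (by omega)

def mkNat (obj : ℤ → V) (mp : ∀ i : ℤ, obj i ⟶ obj (i + 1)) (G : ℤ ⥤ V)
    (app : ∀ i, obj i ⟶ G.obj i)
    (comm : ∀ i : ℤ, mp i ≫ app (i + 1) = app i ≫ G.map (homOfLE (by omega : i ≤ i + 1))) :
    mk obj mp ⟶ G where
  app := app
  naturality {i j} g := by
    have hle : i ≤ j := leOfHom g
    have hg : g = homOfLE hle := Subsingleton.elim _ _
    subst hg
    show auxMap obj mp ((j - i).toNat) i j _ ≫ app j = app i ≫ G.map (homOfLE hle)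
    have main : ∀ (n : ℕ) (i j : ℤ) (h : i + n = j),
        auxMap obj mp n i j h ≫ app j = app i ≫ G.map (homOfLE (by omega : i ≤ j)) := by
      intro n
      induction n with
      | zero =>
        intro i j h
        have hij : i = j := by omega
        subst hij
        have h1 : (homOfLE (by omega : i ≤ i)) = 𝟙 i := Subsingleton.elim _ _
        rw [h1, G.map_id]
        simp [auxMap]
      | succ n ih =>
        intro i j h
        show (mp i ≫ auxMap obj mp n (i + 1) j _) ≫ app j = _
        rw [Category.assoc, ih (i + 1) j (by omega), ← Category.assoc,
          comm i, Category.assoc, ← G.map_comp]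
        congr 1
    exact main _ i j _

end ZFunctor


open HomologicalComplex

namespace WCons

variable {K : Type} [Field K] (X : PersDGZ K)

noncomputable def fmor (i : ℤ) : X.obj i ⟶ X.obj (i + 1) :=
  X.map (homOfLE (by omega : i ≤ i + 1))

noncomputable def Wmod (i n : ℤ) : ModuleCat.{0} K :=
  ModuleCat.of K (((X.obj i).X n) × ((X.obj i).homology n) × ((X.obj i).homology (n - 1)))

noncomputable def hcst (i : ℤ) {m n : ℤ} (h : m = n) :
    (X.obj i).homology m ⟶ (X.obj i).homology n :=
  eqToHom (congrArg (fun k => (X.obj i).homology k) h)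

lemma fam_natural {P Q : ℤ → ModuleCat.{0} K} (u : ∀ m, P m ⟶ Q m) {m n : ℤ} (h : m = n)
    (y : P m) :
    u n ((eqToHom (congrArg P h) : P m ⟶ P n) y) =
      (eqToHom (congrArg Q h) : Q m ⟶ Q n) (u m y) := by
  subst h; rfl

lemma cast_cast {P : ℤ → ModuleCat.{0} K} {a b : ℤ} (h : a = b) (h' : b = a) (y : P a) :
    (eqToHom (congrArg P h') : P b ⟶ P a) ((eqToHom (congrArg P h) : P a ⟶ P b) y) = y := by
  subst h; rfl

lemma hcst_hcst (i : ℤ) {a b c : ℤ} (h1 : a = b) (h2 : b = c) (y : (X.obj i).homology a) :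
    hcst X i h2 (hcst X i h1 y) = hcst X i (h1.trans h2) y := by
  subst h1 h2; rfl

lemma hcst_self (i : ℤ) {a : ℤ} (h : a = a) (y : (X.obj i).homology a) :
    hcst X i h y = y := rfl

lemma Wcast_apply (i : ℤ) {m n : ℤ} (h : m = n) (v : Wmod X i m) :
    (eqToHom (congrArg (Wmod X i) h) : Wmod X i m ⟶ Wmod X i n) v =
      ((eqToHom (congrArg (fun k => (X.obj i).X k) h) :
          (X.obj i).X m ⟶ (X.obj i).X n) v.1,
       hcst X i h v.2.1, hcst X i (by rw [h]) v.2.2) := by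
  subst h; rfl

noncomputable def etacast (i n : ℤ) : (X.obj i).X n ⟶ (X.obj i).homology (n + 1 - 1) :=
  etaf (X.obj i) n ≫ hcst X i (by ring)

lemma etacast_apply (i n : ℤ) (x : (X.obj i).X n) :
    etacast X i n x = hcst X i (by ring : n = n + 1 - 1) (etaf (X.obj i) n x) := rfl

noncomputable def Wd (i n : ℤ) : Wmod X i n ⟶ Wmod X i (n + 1) :=
  ModuleCat.ofHom <| LinearMap.prod
    ((((X.obj i).d n (n + 1)).hom : _ →ₗ[K] _).comp (LinearMap.fst K _ _))
    (LinearMap.prod 0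
      ((((etacast X i n).hom : _ →ₗ[K] _).comp (LinearMap.fst K _ _)) -
        (((hcst X i (by ring : n = n + 1 - 1)).hom : _ →ₗ[K] _).comp
          ((LinearMap.fst K _ _).comp (LinearMap.snd K _ _)))))

lemma Wd_apply (i n : ℤ) (v : Wmod X i n) :
    Wd X i n v = (((X.obj i).d n (n + 1)) v.1, 0,
      etacast X i n v.1 - hcst X i (by ring : n = n + 1 - 1) v.2.1) := rfl

lemma Wd_sq (i n : ℤ) : Wd X i n ≫ Wd X i (n + 1) = 0 := by
  ext v
  show Wd X i (n + 1) (Wd X i n v) = 0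
  rw [Wd_apply, Wd_apply]
  have h1 : (X.obj i).d (n + 1) (n + 1 + 1) (((X.obj i).d n (n + 1)) v.1) = 0 := by
    exact ConcreteCategory.congr_hom ((X.obj i).d_comp_d n (n + 1) (n + 1 + 1)) v.1
  have h2 : etaf (X.obj i) (n + 1) (((X.obj i).d n (n + 1)) v.1) = 0 := by
    exact ConcreteCategory.congr_hom (d_etaf (X.obj i) n) v.1
  refine Prod.ext h1 (Prod.ext rfl ?_)
  show etacast X i (n + 1) (((X.obj i).d n (n + 1)) v.1) - hcst X i _ (0 : (X.obj i).homology (n+1)) = 0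
  have h3 : etacast X i (n + 1) (((X.obj i).d n (n + 1)) v.1) = 0 := by
    show hcst X i _ (etaf (X.obj i) (n + 1) (((X.obj i).d n (n + 1)) v.1)) = 0
    rw [h2, map_zero]
  rw [h3, map_zero, sub_zero]

noncomputable def WC (i : ℤ) : CochainComplex (ModuleCat.{0} K) ℤ :=
  CochainComplex.of (Wmod X i) (Wd X i) (Wd_sq X i)

lemma WC_d (i n : ℤ) : (WC X i).d n (n + 1) = Wd X i n := CochainComplex.of_d _ _ _

lemma WC_d' (i : ℤ) {m n : ℤ} (h : m + 1 = n) :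
    (WC X i).d m n = Wd X i m ≫ eqToHom (congrArg (Wmod X i) h) := by
  subst h
  rw [WC_d]
  simp
  rfl

noncomputable def alphaHom (i : ℤ) : WC X i ⟶ X.obj i where
  f n := ModuleCat.ofHom (LinearMap.fst K ((X.obj i).X n) _)
  comm' n j hij := by
    obtain rfl : n + 1 = j := hij
    rw [WC_d]
    ext v
    rfl

noncomputable def iotaHom (i : ℤ) : X.obj i ⟶ WC X i where
  f n := ModuleCat.ofHom (LinearMap.prod (LinearMap.id : (X.obj i).X n →ₗ[K] (X.obj i).X n)
    (LinearMap.prod (etaf (X.obj i) n).hom 0))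
  comm' n j hij := by
    obtain rfl : n + 1 = j := hij
    show _ ≫ (WC X i).d n (n + 1) = (X.obj i).d n (n + 1) ≫ _
    rw [WC_d]
    ext x
    show Wd X i n (x, etaf (X.obj i) n x, 0) =
      (((X.obj i).d n (n + 1)) x, etaf (X.obj i) (n + 1) (((X.obj i).d n (n + 1)) x), 0)
    erw [Wd_apply]
    have h2 : etaf (X.obj i) (n + 1) (((X.obj i).d n (n + 1)) x) = 0 :=
      ConcreteCategory.congr_hom (d_etaf (X.obj i) n) x
    refine Prod.ext rfl (Prod.ext h2.symm ?_)
    show etacast X i n x - hcst X i _ (etaf (X.obj i) n x) = 0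
    have : etacast X i n x = hcst X i (by ring : n = n + 1 - 1) (etaf (X.obj i) n x) := rfl
    rw [this, sub_self]

noncomputable def betaHom (i : ℤ) : WC X i ⟶ homologyComplex K (X.obj i) where
  f n := ModuleCat.ofHom ((LinearMap.fst K ((X.obj i).homology n) ((X.obj i).homology (n - 1))).comp
    (LinearMap.snd K ((X.obj i).X n) _))
  comm' n j hij := by
    obtain rfl : n + 1 = j := hij
    show _ ≫ (homologyComplex K (X.obj i)).d n (n + 1) = (WC X i).d n (n + 1) ≫ _
    rw [WC_d]
    ext v
    show (0 : (X.obj i).homology (n+1)) = (Wd X i n v).2.1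
    erw [Wd_apply]

lemma iota_alpha (i : ℤ) : iotaHom X i ≫ alphaHom X i = 𝟙 (X.obj i) := by
  ext n v
  rfl

noncomputable def theta1 (i n : ℤ) : (WC X i).X n ⟶ (WC X i).X (n - 1) :=
  (ModuleCat.ofHom (LinearMap.prod 0 (LinearMap.prod ((LinearMap.snd K _ _).comp (LinearMap.snd K _ _)) 0)) :
    Wmod X i n ⟶ Wmod X i (n - 1))

noncomputable def homotopy1 (i : ℤ) :
    Homotopy (alphaHom X i ≫ iotaHom X i) (𝟙 (WC X i)) := by
  refine mkHomotopy _ _ (theta1 X i) ?_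
  intro n v
  rw [WC_d X i n, WC_d' X i (show n - 1 + 1 = n by ring)]
  have hT1 : (eqToHom (congrArg (Wmod X i) (show n + 1 - 1 = n by ring)) :
      Wmod X i (n + 1 - 1) ⟶ Wmod X i n) (theta1 X i (n + 1) (Wd X i n v)) =
      ((0 : (X.obj i).X n), etaf (X.obj i) n v.1 - v.2.1,
        (0 : (X.obj i).homology (n - 1))) := by
    have hθ1 : theta1 X i (n + 1) (Wd X i n v) =
        ((0 : (X.obj i).X (n + 1 - 1)),
          etacast X i n v.1 - hcst X i (by ring : n = n + 1 - 1) v.2.1,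
          (0 : (X.obj i).homology (n + 1 - 1 - 1))) := rfl
    erw [hθ1, Wcast_apply X i (show n + 1 - 1 = n by ring)]
    refine Prod.ext (map_zero _) (Prod.ext ?_ (map_zero _))
    show hcst X i _ (etacast X i n v.1 - hcst X i _ v.2.1) = _
    rw [map_sub, etacast_apply, hcst_hcst, hcst_hcst, hcst_self, hcst_self]
  have hT2 : (eqToHom (congrArg (Wmod X i) (show n - 1 + 1 = n by ring)) :
      Wmod X i (n - 1 + 1) ⟶ Wmod X i n) (Wd X i (n - 1) (theta1 X i n v)) =
      ((0 : (X.obj i).X n), (0 : (X.obj i).homology n), -v.2.2) := by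
    have hd2 : Wd X i (n - 1) (theta1 X i n v) =
        ((0 : (X.obj i).X (n - 1 + 1)), (0 : (X.obj i).homology (n - 1 + 1)),
          -(hcst X i (by ring : n - 1 = n - 1 + 1 - 1) v.2.2)) := by
      have hθ2 : theta1 X i n v = ((0 : (X.obj i).X (n - 1)), v.2.2,
          (0 : (X.obj i).homology (n - 1 - 1))) := rfl
      erw [hθ2, Wd_apply]
      refine Prod.ext (map_zero _) (Prod.ext rfl ?_)
      show etacast X i (n - 1) 0 - hcst X i _ v.2.2 = -(hcst X i _ v.2.2)
      rw [map_zero, zero_sub]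
    erw [hd2, Wcast_apply X i (show n - 1 + 1 = n by ring)]
    refine Prod.ext (map_zero _) (Prod.ext (map_zero _) ?_)
    show hcst X i _ (-(hcst X i _ v.2.2)) = -v.2.2
    rw [map_neg, hcst_hcst, hcst_self]
  let w : ↑(Wmod X i n) := v
  show ((w.1, etaf (X.obj i) n w.1, (0 : (X.obj i).homology (n - 1))) : ↑(Wmod X i n)) =
    (eqToHom (congrArg (Wmod X i) (show n + 1 - 1 = n by ring)) :
        Wmod X i (n + 1 - 1) ⟶ Wmod X i n) (theta1 X i (n + 1) (Wd X i n v)) +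
      (eqToHom (congrArg (Wmod X i) (show n - 1 + 1 = n by ring)) :
        Wmod X i (n - 1 + 1) ⟶ Wmod X i n) (Wd X i (n - 1) (theta1 X i n v)) + w
  rw [hT1, hT2]
  refine Prod.ext ?_ (Prod.ext ?_ ?_)
  · show v.1 = 0 + 0 + v.1
    simp
  · show etaf (X.obj i) n v.1 = (etaf (X.obj i) n v.1 - v.2.1) + 0 + v.2.1
    simp
  · show (0 : (X.obj i).homology (n - 1)) = 0 + -v.2.2 + v.2.2
    simp

noncomputable def htpyEquivWA (i : ℤ) : HomotopyEquiv (WC X i) (X.obj i) where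
  hom := alphaHom X i
  inv := iotaHom X i
  homotopyHomInvId := homotopy1 X i
  homotopyInvHomId := Homotopy.ofEq (iota_alpha X i)

lemma quasiIso_alphaHom (i : ℤ) : QuasiIso (alphaHom X i) :=
  inferInstanceAs (QuasiIso (htpyEquivWA X i).hom)

noncomputable def theta2 (i n : ℤ) :
    (WC X i).X n ⟶ (homologyComplex K (X.obj i)).X (n - 1) :=
  -ModuleCat.ofHom ((LinearMap.snd K ((X.obj i).homology n) ((X.obj i).homology (n - 1))).comp
      (LinearMap.snd K ((X.obj i).X n)
        (((X.obj i).homology n) × ((X.obj i).homology (n - 1)))))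

noncomputable def homotopy2 (i : ℤ) :
    Homotopy (betaHom X i) (alphaHom X i ≫ etaHom (X.obj i)) := by
  refine mkHomotopy _ _ (theta2 X i) ?_
  intro n v
  rw [WC_d X i n]
  have h1 : hcst X i (show n + 1 - 1 = n by ring) (theta2 X i (n + 1) (Wd X i n v)) =
      v.2.1 - etaf (X.obj i) n v.1 := by
    have ht : theta2 X i (n + 1) (Wd X i n v) =
        -(etacast X i n v.1 - hcst X i (by ring : n = n + 1 - 1) v.2.1) := rfl
    rw [ht, map_neg, map_sub, etacast_apply, hcst_hcst, hcst_hcst, hcst_self, hcst_self]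
    rw [neg_sub]
  show (v.2.1 : (X.obj i).homology n) =
      hcst X i (show n + 1 - 1 = n by ring) (theta2 X i (n + 1) (Wd X i n v)) +
      (0 : (X.obj i).homology n) + etaf (X.obj i) n v.1
  rw [h1]
  simp

lemma quasiIso_betaHom (i : ℤ) : QuasiIso (betaHom X i) := by
  constructor
  intro n
  rw [quasiIsoAt_iff_isIso_homologyMap]
  have heq : homologyMap (betaHom X i) n =
      homologyMap (alphaHom X i ≫ etaHom (X.obj i)) n :=
    Homotopy.homologyMap_eq (homotopy2 X i) n
  rw [heq, homologyMap_comp]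
  have h1 : IsIso (homologyMap (alphaHom X i) n) := by
    haveI := quasiIso_alphaHom X i
    rw [← quasiIsoAt_iff_isIso_homologyMap]
    infer_instance
  have h2 : IsIso (homologyMap (etaHom (X.obj i)) n) := by
    haveI := quasiIso_etaHom (X.obj i)
    rw [← quasiIsoAt_iff_isIso_homologyMap]
    infer_instance
  exact IsIso.comp_isIso

noncomputable def emap (i m : ℤ) : (X.obj i).X m ⟶ (X.obj (i + 1)).homology m :=
  (fmor X i).f m ≫ etaf (X.obj (i + 1)) m -
    etaf (X.obj i) m ≫ homologyMap (fmor X i) m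

lemma iCycles_emap (i m : ℤ) : (X.obj i).iCycles m ≫ emap X i m = 0 := by
  simp only [emap, Preadditive.comp_sub]
  rw [← Category.assoc, ← cyclesMap_i (fmor X i) m, Category.assoc, iCycles_etaf,
    ← Category.assoc, iCycles_etaf, homologyπ_naturality, sub_self]

lemma emap_vanish (i m : ℤ) (x : (X.obj i).X m) (hx : (X.obj i).d m (m + 1) x = 0) :
    emap X i m x = 0 :=
  vanish_on_cycles _ (iCycles_emap X i m) x hx

noncomputable def hmap (i n : ℤ) : (X.obj i).X n ⟶ (X.obj (i + 1)).homology (n - 1) :=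
  (gi (X.obj i) n : (X.obj i).X n ⟶ (X.obj i).X (n - 1)) ≫ emap X i (n - 1)

lemma hmap_d (i n : ℤ) (x : (X.obj i).X n) :
    hmap X i (n + 1) ((X.obj i).d n (n + 1) x) =
      hcst X (i + 1) (show n = n + 1 - 1 by ring) (emap X i n x) := by
  have step1 : gi (X.obj i) (n + 1) ((X.obj i).d n (n + 1) x) =
      (eqToHom (congrArg (X.obj i).X (show n = n + 1 - 1 by ring)) :
        (X.obj i).X n ⟶ (X.obj i).X (n + 1 - 1))
        (giup (X.obj i) n ((X.obj i).d n (n + 1) x)) := by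
    have hgiup : giup (X.obj i) n ((X.obj i).d n (n + 1) x) =
        (eqToHom (congrArg (X.obj i).X (show n + 1 - 1 = n by ring)) :
          (X.obj i).X (n + 1 - 1) ⟶ (X.obj i).X n)
          (gi (X.obj i) (n + 1) ((X.obj i).d n (n + 1) x)) := rfl
    rw [hgiup]
    exact (cast_cast (P := (X.obj i).X) (show n + 1 - 1 = n by ring)
      (show n = n + 1 - 1 by ring) _).symm
  have step2 : emap X i (n + 1 - 1)
      ((eqToHom (congrArg (X.obj i).X (show n = n + 1 - 1 by ring)) :
        (X.obj i).X n ⟶ (X.obj i).X (n + 1 - 1))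
        (giup (X.obj i) n ((X.obj i).d n (n + 1) x))) =
      hcst X (i + 1) (show n = n + 1 - 1 by ring)
        (emap X i n (giup (X.obj i) n ((X.obj i).d n (n + 1) x))) :=
    fam_natural (P := (X.obj i).X) (fun m => emap X i m) (show n = n + 1 - 1 by ring) _
  have step3 : emap X i n (giup (X.obj i) n ((X.obj i).d n (n + 1) x)) = emap X i n x := by
    have hcyc : (X.obj i).d n (n + 1) (giup (X.obj i) n ((X.obj i).d n (n + 1) x) - x) = 0 := by
      rw [map_sub]
      have := ConcreteCategory.congr_hom (giup_spec (X.obj i) n) x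
      have h' : (X.obj i).d n (n + 1) (giup (X.obj i) n ((X.obj i).d n (n + 1) x)) =
          (X.obj i).d n (n + 1) x := this
      rw [h', sub_self]
    have h0 := emap_vanish X i n _ hcyc
    rw [map_sub] at h0
    exact sub_eq_zero.1 h0
  show emap X i (n + 1 - 1) (gi (X.obj i) (n + 1) ((X.obj i).d n (n + 1) x)) = _
  rw [step1, step2, step3]

noncomputable def Ff (i n : ℤ) : Wmod X i n ⟶ Wmod X (i + 1) n :=
  ModuleCat.ofHom <| LinearMap.prod (((fmor X i).f n).hom.comp (LinearMap.fst K _ _))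
    (LinearMap.prod
      ((homologyMap (fmor X i) n).hom.comp
        ((LinearMap.fst K _ _).comp (LinearMap.snd K _ _)))
      ((homologyMap (fmor X i) (n - 1)).hom.comp
        ((LinearMap.snd K _ _).comp (LinearMap.snd K _ _)) +
       (hmap X i n).hom.comp (LinearMap.fst K _ _)))

lemma Ff_apply (i n : ℤ) (v : Wmod X i n) :
    Ff X i n v = ((fmor X i).f n v.1, homologyMap (fmor X i) n v.2.1,
      homologyMap (fmor X i) (n - 1) v.2.2 + hmap X i n v.1) := rfl

lemma Ff_comm (i n : ℤ) : Ff X i n ≫ Wd X (i + 1) n = Wd X i n ≫ Ff X i (n + 1) := by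
  ext v
  show Wd X (i + 1) n (Ff X i n v) = Ff X i (n + 1) (Wd X i n v)
  rw [Wd_apply, Ff_apply, Ff_apply, Wd_apply]
  have c1 : (X.obj (i + 1)).d n (n + 1) ((fmor X i).f n v.1) =
      (fmor X i).f (n + 1) ((X.obj i).d n (n + 1) v.1) :=
    ConcreteCategory.congr_hom ((fmor X i).comm n (n + 1)) v.1
  refine Prod.ext c1 (Prod.ext (map_zero _).symm ?_)
  show etacast X (i + 1) n ((fmor X i).f n v.1) -
      hcst X (i + 1) (by ring : n = n + 1 - 1) (homologyMap (fmor X i) n v.2.1) =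
    homologyMap (fmor X i) (n + 1 - 1)
        (etacast X i n v.1 - hcst X i (by ring : n = n + 1 - 1) v.2.1) +
      hmap X i (n + 1) ((X.obj i).d n (n + 1) v.1)
  rw [map_sub, hmap_d]
  have nat1 : homologyMap (fmor X i) (n + 1 - 1)
      (hcst X i (show n = n + 1 - 1 by ring) v.2.1) =
      hcst X (i + 1) (show n = n + 1 - 1 by ring) (homologyMap (fmor X i) n v.2.1) :=
    fam_natural (fun m => homologyMap (fmor X i) m) (show n = n + 1 - 1 by ring) _
  have nat2 : homologyMap (fmor X i) (n + 1 - 1) (etacast X i n v.1) =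
      hcst X (i + 1) (show n = n + 1 - 1 by ring)
        (homologyMap (fmor X i) n (etaf (X.obj i) n v.1)) := by
    rw [etacast_apply]
    exact fam_natural (fun m => homologyMap (fmor X i) m) (show n = n + 1 - 1 by ring) _
  rw [nat1, nat2, etacast_apply]
  have hem : hcst X (i + 1) (show n = n + 1 - 1 by ring) (emap X i n v.1) =
      hcst X (i + 1) (show n = n + 1 - 1 by ring)
        (etaf (X.obj (i + 1)) n ((fmor X i).f n v.1)) -
      hcst X (i + 1) (show n = n + 1 - 1 by ring)
        (homologyMap (fmor X i) n (etaf (X.obj i) n v.1)) := by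
    rw [← map_sub]
    rfl
  rw [hem]
  have heta : hcst X (i + 1) (show n = n + 1 - 1 by ring)
      (etaf (X.obj (i + 1)) n ((fmor X i).f n v.1)) =
      etacast X (i + 1) n ((fmor X i).f n v.1) := rfl
  rw [heta]
  abel

noncomputable def FHom (i : ℤ) : WC X i ⟶ WC X (i + 1) where
  f n := Ff X i n
  comm' n j hij := by
    obtain rfl : n + 1 = j := hij
    show Ff X i n ≫ (WC X (i + 1)).d n (n + 1) = (WC X i).d n (n + 1) ≫ Ff X i (n + 1)
    rw [WC_d, WC_d]
    exact Ff_comm X i n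

noncomputable def Wfun : PersDGZ K := ZFunctor.mk (fun i => WC X i) (fun i => FHom X i)

noncomputable def alphaNat : Wfun X ⟶ X := by
  refine ZFunctor.mkNat _ _ X (fun i => alphaHom X i) ?_
  intro i
  ext n v
  show (fmor X i).f n v.1 = (X.map (homOfLE (by omega : i ≤ i + 1))).f n v.1
  rfl

noncomputable def betaNat : Wfun X ⟶ Hpers K X := by
  refine ZFunctor.mkNat _ _ (Hpers K X) (fun i => betaHom X i) ?_
  intro i
  ext n v
  show homologyMap (fmor X i) n v.2.1 =
    homologyMap (X.map (homOfLE (by omega : i ≤ i + 1))) n v.2.1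
  rfl

lemma zigzagQIso_Hpers (X : PersDGZ K) : ZigzagQIso K X (Hpers K X) := by
  refine Relation.ReflTransGen.head (b := Wfun X) (Or.inr ?_)
    (Relation.ReflTransGen.single (Or.inl ?_))
  · exact ⟨alphaNat X, fun i => quasiIso_alphaHom X i⟩
  · exact ⟨betaNat X, fun i => quasiIso_betaHom X i⟩

end WCons

/-- if the cohomologies `H(X)` and `H(Y)` (with zero differentials) of two
persistence dg modules over `ℤ` are `m`-interleaved for a non-negative integer `m`, then
`X` and `Y` are `m`-homotopy interleaved: they are quasi-isomorphism-zigzag equivalent to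
persistence dg modules `X'` and `Y'` that are `m`-interleaved. -/
theorem homotopy_interleaved_of_cohomology_interleaved (K : Type) [Field K]
    (X Y : PersDGZ K) (m : ℕ)
    (h : DGInterleaved K (m : ℤ) (Hpers K X) (Hpers K Y)) :
    ∃ X' Y' : PersDGZ K,
      ZigzagQIso K X X' ∧ ZigzagQIso K Y Y' ∧ DGInterleaved K (m : ℤ) X' Y' :=
  ⟨Hpers K X, Hpers K Y, WCons.zigzagQIso_Hpers X, WCons.zigzagQIso_Hpers Y, h⟩
end
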